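/- arXiv:math/0511647 — 5 statements merged into one kernel-verified Lean document; each statement's English description precedes it below -/
import Mathlib

section
/- Let F and F′ be finite groups with |F| = |F′|. Then there is a bijection Φ : ℤ ≀ F → ℤ ≀ F′ which is an isometry from the word metric d_{S_F} to the word metric d_{S_{F′}}, where for a finite group F the generating set S_F of ℤ ≀ F consists of all elements (f, 0) with f ≠ 1 supported in {0}, together with the elements (1, 1) and (1, −1). In other words, the Cayley graph of ℤ ≀ F with respect to S_F depends, up to isometry, only on the cardinality |F| and not on the group structure of F. -/
open Set

noncomputable section

/-- The (unrestricted) wreath product `(ℤ → F) ⋊ ℤ`, with `ℤ` acting by shifts. -/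
def WreathZ (F : Type*) := (ℤ → F) × ℤ

namespace WreathZ

variable {F : Type*} [Group F]

instance : Group (WreathZ F) where
  mul a b := (fun i => a.1 i * b.1 (i - a.2), a.2 + b.2)
  one := (fun _ => 1, 0)
  inv a := (fun i => (a.1 (i + a.2))⁻¹, -a.2)
  mul_assoc a b c := by
    show ((fun i => (a.1 i * b.1 (i - a.2)) * c.1 (i - (a.2 + b.2)), (a.2 + b.2) + c.2)
        : (ℤ → F) × ℤ)
      = (fun i => a.1 i * (b.1 (i - a.2) * c.1 (i - a.2 - b.2)), a.2 + (b.2 + c.2))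
    refine Prod.ext ?_ ?_
    · funext i
      show (a.1 i * b.1 (i - a.2)) * c.1 (i - (a.2 + b.2))
        = a.1 i * (b.1 (i - a.2) * c.1 (i - a.2 - b.2))
      rw [mul_assoc, sub_add_eq_sub_sub]
    · exact add_assoc _ _ _
  one_mul a := by
    show ((fun i => 1 * a.1 (i - 0), 0 + a.2) : (ℤ → F) × ℤ) = a
    refine Prod.ext ?_ ?_
    · funext i
      show 1 * a.1 (i - 0) = a.1 i
      rw [one_mul, sub_zero]
    · exact zero_add _
  mul_one a := by
    show ((fun i => a.1 i * 1, a.2 + 0) : (ℤ → F) × ℤ) = a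
    refine Prod.ext ?_ ?_
    · funext i
      show a.1 i * 1 = a.1 i
      rw [mul_one]
    · exact add_zero _
  inv_mul_cancel a := by
    show ((fun i => (a.1 (i + a.2))⁻¹ * a.1 (i - -a.2), -a.2 + a.2) : (ℤ → F) × ℤ)
      = ((fun _ => 1, 0) : (ℤ → F) × ℤ)
    refine Prod.ext ?_ ?_
    · funext i
      show (a.1 (i + a.2))⁻¹ * a.1 (i - -a.2) = 1
      rw [sub_neg_eq_add, inv_mul_cancel]
    · simp

@[simp] theorem mul_fst (a b : WreathZ F) :
    (a * b).1 = fun i => a.1 i * b.1 (i - a.2) := rfl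
@[simp] theorem mul_snd (a b : WreathZ F) : (a * b).2 = a.2 + b.2 := rfl
@[simp] theorem one_fst : ((1 : WreathZ F)).1 = fun _ => 1 := rfl
@[simp] theorem one_snd : ((1 : WreathZ F)).2 = 0 := rfl
@[simp] theorem inv_fst (a : WreathZ F) : (a⁻¹).1 = fun i => (a.1 (i + a.2))⁻¹ := rfl
@[simp] theorem inv_snd (a : WreathZ F) : (a⁻¹).2 = -a.2 := rfl

end WreathZ

/-- The lamplighter group `ℤ ≀ F = (⊕_{i ∈ ℤ} F) ⋊ ℤ`: the subgroup of the unrestricted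
wreath product consisting of finitely supported configurations of lamps. -/
def Lamp (F : Type*) [Group F] : Subgroup (WreathZ F) where
  carrier := {a : WreathZ F | {i : ℤ | a.1 i ≠ 1}.Finite}
  mul_mem' := by
    intro a b ha hb
    refine Set.Finite.subset (Set.Finite.union ha (Set.Finite.image (· + a.2) hb)) ?_
    intro i hi
    by_cases h1 : a.1 i = 1
    · right
      refine ⟨i - a.2, ?_, by ring⟩
      intro hcon
      exact hi (by show a.1 i * b.1 (i - a.2) = 1; rw [h1, hcon, one_mul])
    · exact Or.inl h1
  one_mem' := by
    show {i : ℤ | ((1 : WreathZ F)).1 i ≠ 1}.Finite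
    have h : {i : ℤ | ((1 : WreathZ F)).1 i ≠ 1} = ∅ := by
      ext i
      simp [WreathZ.one_fst]
    rw [h]
    exact Set.finite_empty
  inv_mem' := by
    intro a ha
    refine Set.Finite.subset (Set.Finite.image (· - a.2) ha) ?_
    intro i hi
    refine ⟨i + a.2, ?_, by ring⟩
    intro hcon
    exact hi (by show (a.1 (i + a.2))⁻¹ = 1; rw [hcon, inv_one])

/-- The word norm of `g` with respect to a generating set `S`. -/
def wordNorm {Γ : Type*} [Group Γ] (S : Set Γ) (g : Γ) : ℕ :=
  sInf {m : ℕ | ∃ l : List Γ, (∀ x ∈ l, x ∈ S) ∧ l.prod = g ∧ l.length = m}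

/-- The word metric on a group `Γ` with respect to a generating set `S`. -/
def wordDist {Γ : Type*} [Group Γ] (S : Set Γ) (a b : Γ) : ℝ :=
  (wordNorm S (a⁻¹ * b) : ℝ)

/-- `S` is a finite symmetric generating set of `Γ`. -/
def IsFinSymmGen {Γ : Type*} [Group Γ] (S : Set Γ) : Prop :=
  S.Finite ∧ (∀ s ∈ S, s⁻¹ ∈ S) ∧ Subgroup.closure S = ⊤

/-- `f` is a `(K, C)`-quasi-isometric embedding with respect to the given distances. -/
def IsQIE {X Y : Type*} (dX : X → X → ℝ) (dY : Y → Y → ℝ) (K C : ℝ) (f : X → Y) : Prop :=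
  ∀ a b : X, (1 / K) * dX a b - C ≤ dY (f a) (f b) ∧ dY (f a) (f b) ≤ K * dX a b + C

/-- `f` is a `(K, C)`-quasi-isometry with respect to the given distances. -/
def IsQI {X Y : Type*} (dX : X → X → ℝ) (dY : Y → Y → ℝ) (K C : ℝ) (f : X → Y) : Prop :=
  IsQIE dX dY K C f ∧ ∀ y : Y, ∃ x : X, dY (f x) y ≤ C

/-- Two "metric spaces", given by distance functions, are quasi-isometric. -/
def QuasiIsometric {X Y : Type*} (dX : X → X → ℝ) (dY : Y → Y → ℝ) : Prop :=
  ∃ (K C : ℝ) (f : X → Y), 1 ≤ K ∧ 0 ≤ C ∧ IsQI dX dY K C f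

/-- The standard generating set `S_F` of the lamplighter group `ℤ ≀ F`: all elements `(f, 0)`
with `f ≠ 1` supported in `{0}`, together with `(1, 1)` and `(1, -1)`. -/
def lampGen (F : Type*) [Group F] : Set (Lamp F) :=
  {g : Lamp F |
    ((g : WreathZ F).2 = 0 ∧ (∀ i : ℤ, i ≠ 0 → (g : WreathZ F).1 i = 1) ∧
      (g : WreathZ F).1 0 ≠ 1) ∨
    (((g : WreathZ F).1 = fun _ => 1) ∧
      ((g : WreathZ F).2 = 1 ∨ (g : WreathZ F).2 = -1))}

/-! The lamplighter group remembers of `F` only which lamp values are trivial: for `u, v` in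
`ℤ ≀ F`, whether `v` is a neighbour of `u` in the Cayley graph, i.e. `u⁻¹ * v ∈ S_F`, depends only
on the shift of `u⁻¹ * v` and on the set of positions where `u` and `v` carry equal lamps. So a
bijection `F ≃ F'` fixing `1`, applied to every lamp, is an isomorphism of Cayley graphs, hence an
isometry of word metrics. -/

section WordMetric

variable {Γ Γ' : Type*} [Group Γ] [Group Γ'] {S : Set Γ} {S' : Set Γ'}

/-- A map sending `S`-edges to `S'`-edges sends every `S`-path to an `S'`-path of the same
length. -/
theorem exists_word_of_map_adj (Ψ : Γ → Γ') (hΨ : ∀ u v, u⁻¹ * v ∈ S → (Ψ u)⁻¹ * Ψ v ∈ S')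
    {l : List Γ} (hl : ∀ x ∈ l, x ∈ S) (a : Γ) :
    ∃ l' : List Γ', (∀ x ∈ l', x ∈ S') ∧ l'.prod = (Ψ a)⁻¹ * Ψ (a * l.prod) ∧
      l'.length = l.length := by
  induction l generalizing a with
  | nil => exact ⟨[], by simp, by simp, rfl⟩
  | cons s t ih =>
    obtain ⟨t', ht'S, ht'prod, ht'len⟩ := ih (fun x hx => hl x (.tail s hx)) (a * s)
    refine ⟨(Ψ a)⁻¹ * Ψ (a * s) :: t', ?_, ?_, by simp [ht'len]⟩
    · rintro x (_ | ⟨_, hx⟩)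
      · exact hΨ a (a * s) (by simpa using hl s List.mem_cons_self)
      · exact ht'S x hx
    · simp [ht'prod, mul_assoc]

theorem wordNorm_map_eq_of_adj_iff (Ψ : Γ ≃ Γ')
    (hΨ : ∀ u v, (Ψ u)⁻¹ * Ψ v ∈ S' ↔ u⁻¹ * v ∈ S) (a b : Γ) :
    wordNorm S' ((Ψ a)⁻¹ * Ψ b) = wordNorm S (a⁻¹ * b) := by
  have hΨsymm : ∀ u v, u⁻¹ * v ∈ S' → (Ψ.symm u)⁻¹ * Ψ.symm v ∈ S := fun u v h =>
    (hΨ (Ψ.symm u) (Ψ.symm v)).mp (by simpa using h)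
  unfold wordNorm
  congr 1
  ext m
  constructor
  · rintro ⟨l', hl'S, hl'prod, rfl⟩
    obtain ⟨l, hlS, hprod, hlen⟩ := exists_word_of_map_adj Ψ.symm hΨsymm hl'S (Ψ a)
    exact ⟨l, hlS, by simpa [hl'prod] using hprod, hlen⟩
  · rintro ⟨l, hlS, hlprod, rfl⟩
    obtain ⟨l', hl'S, hprod, hlen⟩ :=
      exists_word_of_map_adj Ψ (fun u v => (hΨ u v).mpr) hlS a
    exact ⟨l', hl'S, by simpa [hlprod] using hprod, hlen⟩

theorem wordDist_map_eq_of_adj_iff (Ψ : Γ ≃ Γ')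
    (hΨ : ∀ u v, (Ψ u)⁻¹ * Ψ v ∈ S' ↔ u⁻¹ * v ∈ S) (a b : Γ) :
    wordDist S' (Ψ a) (Ψ b) = wordDist S a b := by
  simp only [wordDist, wordNorm_map_eq_of_adj_iff Ψ hΨ]

end WordMetric

theorem Fintype.exists_equiv_apply_eq {α β : Type*} [Fintype α] [Fintype β]
    (h : Fintype.card α = Fintype.card β) (a : α) (b : β) : ∃ e : α ≃ β, e a = b := by
  classical
  let e := Fintype.equivOfCardEq h
  exact ⟨e.trans (Equiv.swap (e a) b), Equiv.swap_apply_left _ _⟩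

namespace WreathZ

variable {F F' : Type*} [Group F] [Group F']

def mapLamps (e : F → F') (a : WreathZ F) : WreathZ F' := (fun i => e (a.1 i), a.2)

theorem mapLamps_mem_lamp (e : F ≃ F') (he : e 1 = 1) {a : WreathZ F} (ha : a ∈ Lamp F) :
    mapLamps e a ∈ Lamp F' := by
  refine Set.Finite.subset (s := {i | a.1 i ≠ 1}) ha fun i hi h => hi ?_
  simp [mapLamps, h, he]

theorem inv_mul_fst_eq_one_iff (a b : WreathZ F) (i : ℤ) :
    (a⁻¹ * b).1 i = 1 ↔ a.1 (i + a.2) = b.1 (i + a.2) := by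
  simp [inv_mul_eq_one]

theorem mapLamps_inv_mul_fst_eq_one_iff {e : F → F'} (he : e.Injective) (a b : WreathZ F)
    (i : ℤ) : ((mapLamps e a)⁻¹ * mapLamps e b).1 i = 1 ↔ (a⁻¹ * b).1 i = 1 := by
  rw [inv_mul_fst_eq_one_iff, inv_mul_fst_eq_one_iff]
  exact he.eq_iff

end WreathZ

open WreathZ

theorem mem_lampGen_iff_of_fst_eq_one_iff {F F' : Type*} [Group F] [Group F'] {g : Lamp F}
    {g' : Lamp F'} (hsnd : (g' : WreathZ F').2 = (g : WreathZ F).2)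
    (hfst : ∀ i, (g' : WreathZ F').1 i = 1 ↔ (g : WreathZ F).1 i = 1) :
    g' ∈ lampGen F' ↔ g ∈ lampGen F := by
  have hfst' : ((g' : WreathZ F').1 = fun _ => 1) ↔ ((g : WreathZ F).1 = fun _ => 1) := by
    simp only [funext_iff, hfst]
  simp only [lampGen, Set.mem_ofPred_eq, ne_eq, hsnd, hfst, hfst']

namespace Lamp

variable {F F' : Type*} [Group F] [Group F']

def congr (e : F ≃ F') (he : e 1 = 1) : Lamp F ≃ Lamp F' where
  toFun a := ⟨mapLamps e a, mapLamps_mem_lamp e he a.2⟩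
  invFun a := ⟨mapLamps e.symm a, mapLamps_mem_lamp e.symm (e.symm_apply_eq.mpr he.symm) a.2⟩
  left_inv _ := Subtype.ext <| Prod.ext (funext fun _ => e.symm_apply_apply _) rfl
  right_inv _ := Subtype.ext <| Prod.ext (funext fun _ => e.apply_symm_apply _) rfl

theorem congr_inv_mul_mem_lampGen_iff (e : F ≃ F') (he : e 1 = 1) (u v : Lamp F) :
    (congr e he u)⁻¹ * congr e he v ∈ lampGen F' ↔ u⁻¹ * v ∈ lampGen F :=
  mem_lampGen_iff_of_fst_eq_one_iff rfl
    (mapLamps_inv_mul_fst_eq_one_iff e.injective (u : WreathZ F) v)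

theorem wordDist_congr (e : F ≃ F') (he : e 1 = 1) (a b : Lamp F) :
    wordDist (lampGen F') (congr e he a) (congr e he b) = wordDist (lampGen F) a b :=
  wordDist_map_eq_of_adj_iff (congr e he) (congr_inv_mul_mem_lampGen_iff e he) a b

end Lamp

/-- **Theorem.** The Cayley graph of the lamplighter group `ℤ ≀ F` with respect to the
standard generating set `S_F` depends, up to isometry, only on the cardinality `|F|`: if
`|F| = |F'|` there is a bijection `ℤ ≀ F → ℤ ≀ F'` which is an isometry for the word
metrics. -/
theorem lamplighter_cayley_depends_only_on_card
    (F F' : Type*) [Group F] [Fintype F] [Group F'] [Fintype F']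
    (hcard : Fintype.card F = Fintype.card F') :
    ∃ Φ : Lamp F ≃ Lamp F',
      ∀ a b : Lamp F, wordDist (lampGen F) a b = wordDist (lampGen F') (Φ a) (Φ b) := by
  obtain ⟨e, he⟩ := Fintype.exists_equiv_apply_eq hcard (1 : F) (1 : F')
  exact ⟨Lamp.congr e he, fun a b => (Lamp.wordDist_congr e he a b).symm⟩
end
end

section
/- Scales Lemma for Sol: for all K ≥ 1, C ≥ 0 and ε > 0 there exist a positive integer n₀ and a real r* > 0, depending only on K, C and ε, with the following property. Let r₀ ≤ r₁ ≤ … ≤ r_M be positive reals with r₀ ≥ r*, with r_{m−1} dividing r_m and r_m/r_{m−1} ≥ n₀ for 1 ≤ m ≤ M, and let L be a positive multiple of r_M. For a (K,C)-quasi-geodesic segment α : [0,L] → Sol and 1 ≤ m ≤ M, let δ_m(α) = (r_m/L)·#{ j : 0 ≤ j < L/r_m and the restriction of α to [j·r_m, (j+1)·r_m] is not ε-monotone }, where a restriction is called ε-monotone if |t₁ − t₂| < ε·r_m whenever t₁, t₂ ∈ [j·r_m, (j+1)·r_m] satisfy h(α(t₁)) = h(α(t₂)). Then Σ_{m=1}^{M}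 δ_m(α) ≤ 16K³/ε. -/
open Set

noncomputable section

/-- A path `γ : ℝ → E` is piecewise `C¹` on `[0,1]`. -/
def PiecewiseC1 {E : Type*} [NormedAddCommGroup E] [NormedSpace ℝ E] (γ : ℝ → E) : Prop :=
  ∃ (n : ℕ) (τ : ℕ → ℝ), τ 0 = 0 ∧ τ n = 1 ∧ (∀ i < n, τ i ≤ τ (i + 1)) ∧
    ∀ i < n, ContDiffOn ℝ 1 γ (Set.Icc (τ i) (τ (i + 1)))

/-- The `Sol` length of a path `γ(t) = (x(t), y(t), z(t))`, for the metric
`ds² = e^{-z} dx² + e^{z} dy² + dz²`. -/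
def solLength (γ : ℝ → ℝ × ℝ × ℝ) : ℝ :=
  ∫ t in (0:ℝ)..1,
    Real.sqrt (Real.exp (-(γ t).2.2) * (deriv (fun s => (γ s).1) t) ^ 2 +
      Real.exp ((γ t).2.2) * (deriv (fun s => (γ s).2.1) t) ^ 2 +
      (deriv (fun s => (γ s).2.2) t) ^ 2)

/-- The left-invariant distance on `Sol = ℝ³`. -/
def dSol (p q : ℝ × ℝ × ℝ) : ℝ :=
  sInf {ℓ : ℝ | ∃ γ : ℝ → ℝ × ℝ × ℝ,
    γ 0 = p ∧ γ 1 = q ∧ PiecewiseC1 γ ∧ solLength γ = ℓ}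

/-- Height function on `Sol`. -/
def solHeight (p : ℝ × ℝ × ℝ) : ℝ := p.2.2

/-- `α` is a `(K,C)`-quasi-geodesic segment on `[0, L]` with respect to the distance `dX`. -/
def IsQGeoOn {X : Type*} (dX : X → X → ℝ) (K C : ℝ) (α : ℝ → X) (L : ℝ) : Prop :=
  ∀ s ∈ Set.Icc (0:ℝ) L, ∀ t ∈ Set.Icc (0:ℝ) L,
    (1 / K) * |s - t| - C ≤ dX (α s) (α t) ∧ dX (α s) (α t) ≤ K * |s - t| + C

/-- The restriction of `α` to `[a, b]` is `ε`-monotone: equal heights occur only at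
parameters within `ε·(b - a)`. -/
def EpsMonotoneOn (α : ℝ → ℝ × ℝ × ℝ) (ε a b : ℝ) : Prop :=
  ∀ t₁ ∈ Set.Icc a b, ∀ t₂ ∈ Set.Icc a b,
    solHeight (α t₁) = solHeight (α t₂) → |t₁ - t₂| < ε * (b - a)

/-!
Let `V_m` be the total variation of the height of `α` sampled at the multiples of `r_m`.
Refining the sampling from `r_m` to `r_{m-1}` cannot decrease the variation, and each block of
length `r_m` on which `α` is not `ε`-monotone increases it by at least `ε r_m / (8K)`: such a block
contains times `u₁ < u₂`, at least `ε r_m` apart, at which `α` has the same height `h`, and in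
between `α` must leave `[h - u, h + u]`, `u = (u₂ - u₁) / (8K)`. Otherwise, chaining the
quasi-geodesic inequality along a subdivision of `[u₁, u₂]` bounds the `x`-displacement by
`G e^{(h + u + E)/2}` and the `y`-displacement by `G e^{(u + E - h)/2}`, where `E = (K+1)(C+1)` and
`G = (u₂ - u₁ + 1) E`; the path that climbs by `A = 2 log G + u + E`, moves in `x`, descends by
`2A`, moves in `y` and climbs back has length at most `4A + 2`, which for long intervals is less
than the quasi-geodesic lower bound `(u₂ - u₁)/K - C`. Once the sampling error `K r_{m-1} + C` is
small against `ε r_m / K`, summing over the scales gives `∑ δ_m · ε L / (8K) ≤ V_0 ≤ 2KL`.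
-/

namespace SolScales

open MeasureTheory Real

local notation "Sol" => ℝ × ℝ × ℝ

section Partition

variable {τ : ℕ → ℝ} {n : ℕ}

lemma partition_mono (hτ : ∀ i < n, τ i ≤ τ (i + 1)) {i j : ℕ} (hij : i ≤ j) (hjn : j ≤ n) :
    τ i ≤ τ j := by
  induction j, hij using Nat.le_induction with
  | base => rfl
  | succ j _ ih => exact (ih (by omega)).trans (hτ j (by omega))

lemma intervalIntegrable_of_pieces {g : ℝ → ℝ}
    (hg : ∀ i < n, IntervalIntegrable g volume (τ i) (τ (i + 1))) :
    IntervalIntegrable g volume (τ 0) (τ n) := by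
  induction n with
  | zero => exact .refl
  | succ n ih => exact (ih fun i hi => hg i (by omega)).trans (hg n n.lt_succ_self)

lemma intervalIntegrable_of_eqOn_Ioo {f g : ℝ → ℝ} {a b : ℝ} (hab : a ≤ b)
    (hf : ContinuousOn f (Icc a b)) (hfg : EqOn f g (Ioo a b)) :
    IntervalIntegrable g volume a b := by
  rw [intervalIntegrable_iff_integrableOn_Ioo_of_le hab]
  exact (hf.integrableOn_Icc.mono_set Ioo_subset_Icc_self).congr_fun hfg measurableSet_Ioo

lemma _root_.ContDiffOn.intervalIntegrable_deriv {f : ℝ → ℝ} {a b : ℝ} (hab : a ≤ b)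
    (hf : ContDiffOn ℝ 1 f (Icc a b)) : IntervalIntegrable (deriv f) volume a b := by
  rcases hab.eq_or_lt with rfl | hab
  · exact .refl
  exact intervalIntegrable_of_eqOn_Ioo hab.le
    (hf.continuousOn_derivWithin (uniqueDiffOn_Icc hab) le_rfl)
    fun x hx => derivWithin_of_mem_nhds (Icc_mem_nhds hx.1 hx.2)

lemma _root_.ContDiffOn.integral_deriv_eq_sub {f : ℝ → ℝ} {a b c : ℝ} (hbc : b ≤ c)
    (hf : ContDiffOn ℝ 1 f (Icc a c)) (hb : b ∈ Icc a c) :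
    ∫ u in b..c, deriv f u = f c - f b := by
  refine intervalIntegral.integral_eq_sub_of_hasDeriv_right_of_le hbc
    (hf.continuousOn.mono (Icc_subset_Icc hb.1 le_rfl)) (fun x hx => ?_)
    ((hf.intervalIntegrable_deriv (hb.1.trans hbc)).mono_set ?_)
  · have hx' : x ∈ Ioo a c := ⟨hb.1.trans_lt hx.1, hx.2⟩
    exact ((hf.differentiableOn one_ne_zero x (Ioo_subset_Icc_self hx')).differentiableAt
      (Icc_mem_nhds hx'.1 hx'.2)).hasDerivAt.hasDerivWithinAt
  · rw [uIcc_of_le hbc, uIcc_of_le (hb.1.trans hbc)]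
    exact Icc_subset_Icc hb.1 le_rfl

variable {f : ℝ → ℝ} (hτ : ∀ i < n, τ i ≤ τ (i + 1))
  (hf : ∀ i < n, ContDiffOn ℝ 1 f (Icc (τ i) (τ (i + 1))))
include hτ hf

lemma intervalIntegrable_deriv_of_pieces : IntervalIntegrable (deriv f) volume (τ 0) (τ n) :=
  intervalIntegrable_of_pieces fun i hi => (hf i hi).intervalIntegrable_deriv (hτ i hi)

lemma integral_deriv_eq_sub_of_pieces {t : ℝ} (ht : t ∈ Icc (τ 0) (τ n)) :
    ∫ u in τ 0..t, deriv f u = f t - f (τ 0) := by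
  induction n generalizing t with
  | zero => rw [le_antisymm ht.2 ht.1, intervalIntegral.integral_same, sub_self]
  | succ n ih =>
    have hτ' : ∀ i < n, τ i ≤ τ (i + 1) := fun i hi => hτ i (by omega)
    have hf' : ∀ i < n, ContDiffOn ℝ 1 f (Icc (τ i) (τ (i + 1))) := fun i hi => hf i (by omega)
    rcases le_or_gt t (τ n) with htn | htn
    · exact ih hτ' hf' ⟨ht.1, htn⟩
    have h0n : τ 0 ≤ τ n := partition_mono hτ' n.zero_le le_rfl
    have hlast := hf n n.lt_succ_self
    have hnt : IntervalIntegrable (deriv f) volume (τ n) t :=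
      (hlast.intervalIntegrable_deriv (hτ n n.lt_succ_self)).mono_set <| by
        rw [uIcc_of_le htn.le, uIcc_of_le (hτ n n.lt_succ_self)]
        exact Icc_subset_Icc le_rfl ht.2
    rw [← intervalIntegral.integral_add_adjacent_intervals
        (intervalIntegrable_deriv_of_pieces hτ' hf') hnt,
      ih hτ' hf' ⟨h0n, le_rfl⟩,
      (hlast.mono (Icc_subset_Icc le_rfl ht.2)).integral_deriv_eq_sub htn.le ⟨le_rfl, htn.le⟩]
    ring

lemma abs_sub_le_integral_of_pieces {g : ℝ → ℝ} (hg : IntervalIntegrable g volume (τ 0) (τ n))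
    (hfg : ∀ u ∈ Icc (τ 0) (τ n), |deriv f u| ≤ g u) {t : ℝ} (ht : t ∈ Icc (τ 0) (τ n)) :
    |f t - f (τ 0)| ≤ ∫ u in τ 0..t, g u := by
  have hsub : uIcc (τ 0) t ⊆ uIcc (τ 0) (τ n) := by
    rw [uIcc_of_le ht.1, uIcc_of_le (ht.1.trans ht.2)]
    exact Icc_subset_Icc le_rfl ht.2
  rw [← integral_deriv_eq_sub_of_pieces hτ hf ht]
  refine (intervalIntegral.abs_integral_le_integral_abs ht.1).trans <|
    intervalIntegral.integral_mono_on ht.1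
      ((intervalIntegrable_deriv_of_pieces hτ hf).abs.mono_set hsub) (hg.mono_set hsub)
      fun u hu => hfg u ⟨hu.1, hu.2.trans ht.2⟩

end Partition

section Speed

def solSpeed (γ : ℝ → Sol) (t : ℝ) : ℝ :=
  √(exp (-(γ t).2.2) * deriv (fun s => (γ s).1) t ^ 2 +
    exp (γ t).2.2 * deriv (fun s => (γ s).2.1) t ^ 2 + deriv (fun s => (γ s).2.2) t ^ 2)

lemma solLength_eq_integral_solSpeed (γ : ℝ → Sol) :
    solLength γ = ∫ t in (0 : ℝ)..1, solSpeed γ t := rfl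

lemma solSpeed_nonneg (γ : ℝ → Sol) (t : ℝ) : 0 ≤ solSpeed γ t := sqrt_nonneg _

lemma solLength_nonneg (γ : ℝ → Sol) : 0 ≤ solLength γ :=
  intervalIntegral.integral_nonneg zero_le_one fun t _ => solSpeed_nonneg γ t

lemma solSpeed_sq (γ : ℝ → Sol) (t : ℝ) :
    solSpeed γ t ^ 2 = exp (-(γ t).2.2) * deriv (fun s => (γ s).1) t ^ 2 +
      exp (γ t).2.2 * deriv (fun s => (γ s).2.1) t ^ 2 + deriv (fun s => (γ s).2.2) t ^ 2 :=
  sq_sqrt (by positivity)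

lemma abs_deriv_height_le_solSpeed (γ : ℝ → Sol) (t : ℝ) :
    |deriv (fun s => (γ s).2.2) t| ≤ solSpeed γ t :=
  abs_le_of_sq_le_sq (by rw [solSpeed_sq]; nlinarith [exp_pos (-(γ t).2.2), exp_pos (γ t).2.2])
    (solSpeed_nonneg γ t)

lemma abs_le_exp_neg_half_mul {e d v : ℝ} (hv : 0 ≤ v) (h : exp e * d ^ 2 ≤ v ^ 2) :
    |d| ≤ exp (-e / 2) * v := by
  refine abs_le_of_sq_le_sq ?_ (by positivity)
  calc d ^ 2 = exp (-e / 2) ^ 2 * (exp e * d ^ 2) := by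
        rw [← exp_nat_mul, ← mul_assoc, ← exp_add]; ring_nf; simp
    _ ≤ exp (-e / 2) ^ 2 * v ^ 2 := by gcongr
    _ = (exp (-e / 2) * v) ^ 2 := by ring

lemma abs_deriv_fst_le (γ : ℝ → Sol) (t : ℝ) :
    |deriv (fun s => (γ s).1) t| ≤ exp ((γ t).2.2 / 2) * solSpeed γ t := by
  have h := abs_le_exp_neg_half_mul (solSpeed_nonneg γ t) (e := -(γ t).2.2)
    (d := deriv (fun s => (γ s).1) t) (by rw [solSpeed_sq]; nlinarith [exp_pos (γ t).2.2])
  rwa [neg_neg] at h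

lemma abs_deriv_snd_le (γ : ℝ → Sol) (t : ℝ) :
    |deriv (fun s => (γ s).2.1) t| ≤ exp (-(γ t).2.2 / 2) * solSpeed γ t :=
  abs_le_exp_neg_half_mul (solSpeed_nonneg γ t)
    (by rw [solSpeed_sq]; nlinarith [exp_pos (-(γ t).2.2)])

lemma _root_.ContDiffOn.intervalIntegrable_solSpeed {γ : ℝ → Sol} {a b : ℝ} (hab : a ≤ b)
    (hγ : ContDiffOn ℝ 1 γ (Icc a b)) : IntervalIntegrable (solSpeed γ) volume a b := by
  rcases hab.eq_or_lt with rfl | hab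
  · exact .refl
  have hU := uniqueDiffOn_Icc hab
  have hx := hγ.fst.continuousOn_derivWithin hU le_rfl
  have hy := hγ.snd.fst.continuousOn_derivWithin hU le_rfl
  have hz := hγ.snd.snd.continuousOn_derivWithin hU le_rfl
  have hz₀ := hγ.snd.snd.continuousOn
  refine intervalIntegrable_of_eqOn_Ioo hab.le (f := fun t => √(exp (-(γ t).2.2) *
      derivWithin (fun s => (γ s).1) (Icc a b) t ^ 2 +
      exp (γ t).2.2 * derivWithin (fun s => (γ s).2.1) (Icc a b) t ^ 2 +
      derivWithin (fun s => (γ s).2.2) (Icc a b) t ^ 2)) (by fun_prop) fun t ht => ?_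
  simp only [solSpeed, derivWithin_of_mem_nhds (Icc_mem_nhds ht.1 ht.2)]

end Speed

section PiecewiseC1

variable {γ : ℝ → Sol} (hγ : PiecewiseC1 γ)
include hγ

lemma _root_.PiecewiseC1.intervalIntegrable_solSpeed :
    IntervalIntegrable (solSpeed γ) volume 0 1 := by
  obtain ⟨n, τ, h0, h1, hτ, hpc⟩ := hγ
  rw [← h0, ← h1]
  exact intervalIntegrable_of_pieces fun i hi => (hpc i hi).intervalIntegrable_solSpeed (hτ i hi)

lemma _root_.PiecewiseC1.abs_height_sub_le {t : ℝ} (ht : t ∈ Icc (0 : ℝ) 1) :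
    |(γ t).2.2 - (γ 0).2.2| ≤ solLength γ := by
  have hint := hγ.intervalIntegrable_solSpeed
  obtain ⟨n, τ, h0, h1, hτ, hpc⟩ := hγ
  rw [← h0, ← h1] at ht hint
  rw [← h0]
  calc |(γ t).2.2 - (γ (τ 0)).2.2|
      ≤ ∫ u in τ 0..t, solSpeed γ u :=
        abs_sub_le_integral_of_pieces (f := fun s => (γ s).2.2) hτ (fun i hi => (hpc i hi).snd.snd)
          hint (fun u _ => abs_deriv_height_le_solSpeed γ u) ht
    _ ≤ ∫ u in τ 0..τ n, solSpeed γ u :=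
        intervalIntegral.integral_mono_interval le_rfl ht.1 ht.2
          (Filter.Eventually.of_forall fun u => solSpeed_nonneg γ u) hint
    _ = solLength γ := by rw [h0, h1]; rfl

lemma _root_.PiecewiseC1.abs_fst_sub_le :
    |(γ 1).1 - (γ 0).1| ≤ exp (((γ 0).2.2 + solLength γ) / 2) * solLength γ := by
  have hint := hγ.intervalIntegrable_solSpeed
  have hz : ∀ t ∈ Icc (0 : ℝ) 1, _ := fun t ht => hγ.abs_height_sub_le ht
  obtain ⟨n, τ, h0, h1, hτ, hpc⟩ := hγ
  rw [← h0, ← h1] at hint hz ⊢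
  have hderiv (u : ℝ) (hu : u ∈ Icc (τ 0) (τ n)) :
      |deriv (fun s => (γ s).1) u| ≤ exp (((γ (τ 0)).2.2 + solLength γ) / 2) * solSpeed γ u :=
    (abs_deriv_fst_le γ u).trans <| mul_le_mul_of_nonneg_right
      (exp_le_exp.mpr (by linarith [(abs_le.mp (hz u hu)).2])) (solSpeed_nonneg γ u)
  calc |(γ (τ n)).1 - (γ (τ 0)).1|
      ≤ ∫ u in τ 0..τ n, exp (((γ (τ 0)).2.2 + solLength γ) / 2) * solSpeed γ u :=
        abs_sub_le_integral_of_pieces (f := fun s => (γ s).1) hτ (fun i hi => (hpc i hi).fst)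
          (hint.const_mul _) hderiv ⟨partition_mono hτ n.zero_le le_rfl, le_rfl⟩
    _ = _ := by rw [intervalIntegral.integral_const_mul, h0, h1]; rfl

lemma _root_.PiecewiseC1.abs_snd_sub_le :
    |(γ 1).2.1 - (γ 0).2.1| ≤ exp ((solLength γ - (γ 0).2.2) / 2) * solLength γ := by
  have hint := hγ.intervalIntegrable_solSpeed
  have hz : ∀ t ∈ Icc (0 : ℝ) 1, _ := fun t ht => hγ.abs_height_sub_le ht
  obtain ⟨n, τ, h0, h1, hτ, hpc⟩ := hγ
  rw [← h0, ← h1] at hint hz ⊢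
  have hderiv (u : ℝ) (hu : u ∈ Icc (τ 0) (τ n)) :
      |deriv (fun s => (γ s).2.1) u| ≤ exp ((solLength γ - (γ (τ 0)).2.2) / 2) * solSpeed γ u :=
    (abs_deriv_snd_le γ u).trans <| mul_le_mul_of_nonneg_right
      (exp_le_exp.mpr (by linarith [(abs_le.mp (hz u hu)).1])) (solSpeed_nonneg γ u)
  calc |(γ (τ n)).2.1 - (γ (τ 0)).2.1|
      ≤ ∫ u in τ 0..τ n, exp ((solLength γ - (γ (τ 0)).2.2) / 2) * solSpeed γ u :=
        abs_sub_le_integral_of_pieces (f := fun s => (γ s).2.1) hτ (fun i hi => (hpc i hi).snd.fst)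
          (hint.const_mul _) hderiv ⟨partition_mono hτ n.zero_le le_rfl, le_rfl⟩
    _ = _ := by rw [intervalIntegral.integral_const_mul, h0, h1]; rfl

end PiecewiseC1

section Distance

lemma _root_.ContDiff.piecewiseC1 {E : Type*} [NormedAddCommGroup E] [NormedSpace ℝ E]
    {γ : ℝ → E} (hγ : ContDiff ℝ 1 γ) : PiecewiseC1 γ :=
  ⟨1, fun i => i, by simp, by simp, fun i _ => by simp, fun _ _ => hγ.contDiffOn⟩

lemma solLengths_nonempty (p q : Sol) :
    {ℓ : ℝ | ∃ γ : ℝ → Sol, γ 0 = p ∧ γ 1 = q ∧ PiecewiseC1 γ ∧ solLength γ = ℓ}.Nonempty :=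
  ⟨_, fun t => p + t • (q - p), by simp, by simp, (by fun_prop : ContDiff ℝ 1 _).piecewiseC1, rfl⟩

lemma dSol_le_solLength {p q : Sol} {γ : ℝ → Sol} (h0 : γ 0 = p) (h1 : γ 1 = q)
    (hγ : PiecewiseC1 γ) : dSol p q ≤ solLength γ :=
  csInf_le ⟨0, by rintro _ ⟨γ, -, -, -, rfl⟩; exact solLength_nonneg γ⟩ ⟨γ, h0, h1, hγ, rfl⟩

lemma exists_piecewiseC1_solLength_lt {p q : Sol} {D : ℝ} (h : dSol p q < D) :
    ∃ γ : ℝ → Sol, γ 0 = p ∧ γ 1 = q ∧ PiecewiseC1 γ ∧ solLength γ < D := by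
  obtain ⟨_, ⟨γ, h0, h1, hγ, rfl⟩, hlt⟩ := exists_lt_of_csInf_lt (solLengths_nonempty p q) h
  exact ⟨γ, h0, h1, hγ, hlt⟩

lemma abs_solHeight_sub_le_dSol (p q : Sol) : |solHeight q - solHeight p| ≤ dSol p q :=
  le_csInf (solLengths_nonempty p q) <| by
    rintro _ ⟨γ, rfl, rfl, hγ, rfl⟩
    exact hγ.abs_height_sub_le ⟨zero_le_one, le_rfl⟩

lemma dSol_nonneg (p q : Sol) : 0 ≤ dSol p q :=
  (abs_nonneg _).trans (abs_solHeight_sub_le_dSol p q)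

lemma abs_fst_sub_le_of_dSol_lt {p q : Sol} {D : ℝ} (h : dSol p q < D) :
    |q.1 - p.1| ≤ exp ((p.2.2 + D) / 2) * D := by
  obtain ⟨γ, rfl, rfl, hγ, hlt⟩ := exists_piecewiseC1_solLength_lt h
  have := solLength_nonneg γ
  exact hγ.abs_fst_sub_le.trans (by gcongr)

lemma abs_snd_sub_le_of_dSol_lt {p q : Sol} {D : ℝ} (h : dSol p q < D) :
    |q.2.1 - p.2.1| ≤ exp ((D - p.2.2) / 2) * D := by
  obtain ⟨γ, rfl, rfl, hγ, hlt⟩ := exists_piecewiseC1_solLength_lt h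
  have := solLength_nonneg γ
  exact hγ.abs_snd_sub_le.trans (by gcongr)

end Distance

section Polygonal

lemma solSpeed_eq_of_eqOn_affine {γ : ℝ → Sol} {p v : Sol} {m c a b t : ℝ}
    (h : EqOn γ (fun s => p + (m * s - c) • v) (Icc a b)) (ht : t ∈ Ioo a b) :
    solSpeed γ t = √(exp (-(γ t).2.2) * (m * v.1) ^ 2 + exp (γ t).2.2 * (m * v.2.1) ^ 2 +
      (m * v.2.2) ^ 2) := by
  have hev : γ =ᶠ[nhds t] fun s => p + (m * s - c) • v :=
    Filter.eventuallyEq_of_mem (Icc_mem_nhds ht.1 ht.2) h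
  have key (φ : Sol → ℝ) :
      deriv (fun s => φ (γ s)) t = deriv (fun s => φ (p + (m * s - c) • v)) t :=
    (hev.fun_comp φ).deriv_eq
  have hx : deriv (fun s => (γ s).1) t = m * v.1 := by simpa using key Prod.fst
  have hy : deriv (fun s => (γ s).2.1) t = m * v.2.1 := by simpa using key fun x => x.2.1
  have hz : deriv (fun s => (γ s).2.2) t = m * v.2.2 := by simpa using key fun x => x.2.2
  rw [solSpeed, hx, hy, hz]

/-- An upper bound for the length of the straight segment from `p` to `q`, using the extreme
heights of the segment in the exponential weights. -/
def segmentCost (p q : Sol) : ℝ :=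
  exp (-min p.2.2 q.2.2 / 2) * |q.1 - p.1| + exp (max p.2.2 q.2.2 / 2) * |q.2.1 - p.2.1| +
    |q.2.2 - p.2.2|

lemma sqrt_le_mul_segmentCost (p q : Sol) {m z : ℝ} (hm : 0 ≤ m) (hz : z ∈ uIcc p.2.2 q.2.2) :
    √(exp (-z) * (m * (q - p).1) ^ 2 + exp z * (m * (q - p).2.1) ^ 2 + (m * (q - p).2.2) ^ 2) ≤
      m * segmentCost p q := by
  have hx : exp (-z) ≤ exp (-min p.2.2 q.2.2 / 2) ^ 2 := by
    rw [← exp_nat_mul]; exact exp_le_exp.mpr (by push_cast; linarith [hz.1])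
  have hy : exp z ≤ exp (max p.2.2 q.2.2 / 2) ^ 2 := by
    rw [← exp_nat_mul]; exact exp_le_exp.mpr (by push_cast; linarith [hz.2])
  set X := exp (-min p.2.2 q.2.2 / 2) * |q.1 - p.1|
  set Y := exp (max p.2.2 q.2.2 / 2) * |q.2.1 - p.2.1|
  set Z := |q.2.2 - p.2.2|
  have hX : exp (-z) * (q.1 - p.1) ^ 2 ≤ X ^ 2 := by
    rw [mul_pow, sq_abs]; exact mul_le_mul_of_nonneg_right hx (sq_nonneg _)
  have hY : exp z * (q.2.1 - p.2.1) ^ 2 ≤ Y ^ 2 := by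
    rw [mul_pow, sq_abs]; exact mul_le_mul_of_nonneg_right hy (sq_nonneg _)
  have hXYZ : X ^ 2 + Y ^ 2 + Z ^ 2 ≤ (X + Y + Z) ^ 2 := by
    have : 0 ≤ X := by positivity
    have : 0 ≤ Y := by positivity
    have : 0 ≤ Z := by positivity
    nlinarith
  rw [sqrt_le_iff]
  refine ⟨by unfold segmentCost; positivity, ?_⟩
  calc exp (-z) * (m * (q - p).1) ^ 2 + exp z * (m * (q - p).2.1) ^ 2 + (m * (q - p).2.2) ^ 2
      = m ^ 2 * (exp (-z) * (q.1 - p.1) ^ 2 + exp z * (q.2.1 - p.2.1) ^ 2 + Z ^ 2) := by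
        simp only [Z, Prod.fst_sub, Prod.snd_sub, sq_abs]; ring
    _ ≤ m ^ 2 * (X + Y + Z) ^ 2 := by gcongr; linarith
    _ = (m * segmentCost p q) ^ 2 := by rw [segmentCost]; ring

/-- The piecewise affine path through the waypoints `w 0, …, w n`, reaching `w i` at time
`i / n`. -/
def polygonalPath (w : ℕ → Sol) (n : ℕ) (t : ℝ) : Sol :=
  w ⌊n * t⌋₊ + (n * t - ⌊n * t⌋₊) • (w (⌊n * t⌋₊ + 1) - w ⌊n * t⌋₊)

variable (w : ℕ → Sol) {n : ℕ}

lemma polygonalPath_zero : polygonalPath w n 0 = w 0 := by simp [polygonalPath]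

lemma polygonalPath_one : polygonalPath w n 1 = w n := by simp [polygonalPath]

lemma polygonalPath_eqOn (hn : 0 < n) (i : ℕ) :
    EqOn (polygonalPath w n) (fun t => w i + (n * t - i) • (w (i + 1) - w i))
      (Icc (i / n) ((i + 1 : ℕ) / n)) := by
  intro t ht
  have hn' : (0 : ℝ) < n := by exact_mod_cast hn
  have h1 : (i : ℝ) ≤ n * t := by have := (div_le_iff₀ hn').mp ht.1; linarith
  have h2 : n * t ≤ i + 1 := by have := (le_div_iff₀ hn').mp ht.2; push_cast at this; linarith
  rcases h2.lt_or_eq with h2 | h2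
  · have hfl : ⌊(n : ℝ) * t⌋₊ = i := (Nat.floor_eq_iff (h1.trans' (Nat.cast_nonneg i))).mpr ⟨h1, h2⟩
    simp [polygonalPath, hfl]
  · have hfl : ⌊(n : ℝ) * t⌋₊ = i + 1 := by rw [h2]; exact_mod_cast Nat.floor_natCast (i + 1)
    simp only [polygonalPath, hfl]
    rw [h2]
    simp

lemma contDiffOn_polygonalPath (hn : 0 < n) (i : ℕ) :
    ContDiffOn ℝ 1 (polygonalPath w n) (Icc (i / n) ((i + 1 : ℕ) / n)) :=
  (by fun_prop : ContDiff ℝ 1 fun t : ℝ => w i + (n * t - i) • (w (i + 1) - w i))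
    |>.contDiffOn.congr (polygonalPath_eqOn w hn i)

lemma div_le_succ_div (n i : ℕ) : (i : ℝ) / n ≤ (i + 1 : ℕ) / n := by
  gcongr; exact_mod_cast i.le_succ

lemma piecewiseC1_polygonalPath (hn : 0 < n) : PiecewiseC1 (polygonalPath w n) :=
  ⟨n, fun i => i / n, by simp, by simp [hn.ne'], fun i _ => div_le_succ_div n i,
    fun i _ => contDiffOn_polygonalPath w hn i⟩

lemma add_mul_sub_mem_uIcc {a b s : ℝ} (hs : s ∈ Icc (0 : ℝ) 1) : a + s * (b - a) ∈ uIcc a b := by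
  rcases le_total a b with h | h
  · exact mem_uIcc_of_le (by nlinarith [hs.1]) (by nlinarith [hs.2])
  · exact mem_uIcc_of_ge (by nlinarith [hs.2]) (by nlinarith [hs.1])

lemma solLength_polygonalPath_le (hn : 0 < n) :
    solLength (polygonalPath w n) ≤ ∑ i ∈ Finset.range n, segmentCost (w i) (w (i + 1)) := by
  have hn' : (0 : ℝ) < n := by exact_mod_cast hn
  have hint (i : ℕ) : IntervalIntegrable (solSpeed (polygonalPath w n)) volume
      (i / n) ((i + 1 : ℕ) / n) :=
    (contDiffOn_polygonalPath w hn i).intervalIntegrable_solSpeed (div_le_succ_div n i)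
  have hheight (i : ℕ) {t : ℝ} (ht : t ∈ Ioo ((i : ℝ) / n) ((i + 1 : ℕ) / n)) :
      (polygonalPath w n t).2.2 ∈ uIcc (w i).2.2 (w (i + 1)).2.2 := by
    rw [polygonalPath_eqOn w hn i (Ioo_subset_Icc_self ht)]
    refine add_mul_sub_mem_uIcc ⟨?_, ?_⟩
    · have := (div_lt_iff₀ hn').mp ht.1; linarith
    · have := (lt_div_iff₀ hn').mp ht.2; push_cast at this; linarith
  calc solLength (polygonalPath w n)
      = ∑ i ∈ Finset.range n,
          ∫ t in (i / n : ℝ)..((i + 1 : ℕ) / n), solSpeed (polygonalPath w n) t := by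
        rw [intervalIntegral.sum_integral_adjacent_intervals (a := fun i : ℕ => (i : ℝ) / n)
          fun i _ => hint i]
        simp [hn'.ne', solLength_eq_integral_solSpeed]
    _ ≤ ∑ i ∈ Finset.range n,
          ∫ _ in (i / n : ℝ)..((i + 1 : ℕ) / n), n * segmentCost (w i) (w (i + 1)) :=
        Finset.sum_le_sum fun i _ => intervalIntegral.integral_mono_on_of_le_Ioo
          (div_le_succ_div n i) (hint i) intervalIntegrable_const fun t ht =>
            (solSpeed_eq_of_eqOn_affine (polygonalPath_eqOn w hn i) ht).trans_le
              (sqrt_le_mul_segmentCost (w i) (w (i + 1)) hn'.le (hheight i ht))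
    _ = ∑ i ∈ Finset.range n, segmentCost (w i) (w (i + 1)) := by
        refine Finset.sum_congr rfl fun i _ => ?_
        rw [intervalIntegral.integral_const, smul_eq_mul]
        field_simp
        push_cast
        ring

lemma dSol_le_of_solHeight_eq (x₁ y₁ x₂ y₂ h : ℝ) {A : ℝ} (hA : 0 ≤ A) :
    dSol (x₁, y₁, h) (x₂, y₂, h) ≤
      4 * A + exp (-(h + A) / 2) * |x₂ - x₁| + exp ((h - A) / 2) * |y₂ - y₁| := by
  let w : ℕ → Sol
    | 0 => (x₁, y₁, h) | 1 => (x₁, y₁, h + A) | 2 => (x₂, y₁, h + A)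
    | 3 => (x₂, y₁, h - A) | 4 => (x₂, y₂, h - A) | _ => (x₂, y₂, h)
  calc dSol (x₁, y₁, h) (x₂, y₂, h)
      ≤ solLength (polygonalPath w 5) :=
        dSol_le_solLength (polygonalPath_zero w) (polygonalPath_one w)
          (piecewiseC1_polygonalPath w (by norm_num))
    _ ≤ ∑ i ∈ Finset.range 5, segmentCost (w i) (w (i + 1)) :=
        solLength_polygonalPath_le w (by norm_num)
    _ = _ := by
        have h2A : |h - A - (h + A)| = 2 * A := by
          rw [show h - A - (h + A) = -(2 * A) by ring, abs_neg, abs_of_nonneg (by linarith)]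
        simp only [segmentCost, Finset.sum_range_succ, Finset.range_one, Finset.sum_singleton,
          zero_add, sub_self, abs_zero, mul_zero, add_zero, add_sub_cancel_left, abs_of_nonneg hA,
          Nat.reduceAdd, min_self, neg_add_rev, max_self, h2A, neg_sub, sub_sub_cancel, w]
        ring

lemma dSol_le_of_abs_sub_le {p q : Sol} {G c : ℝ} (hpq : p.2.2 = q.2.2) (hG : 1 ≤ G) (hc : 0 ≤ c)
    (hx : |q.1 - p.1| ≤ G * exp ((p.2.2 + c) / 2))
    (hy : |q.2.1 - p.2.1| ≤ G * exp ((c - p.2.2) / 2)) :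
    dSol p q ≤ 4 * (2 * log G + c) + 2 := by
  obtain ⟨x₁, y₁, h⟩ := p
  obtain ⟨x₂, y₂, h'⟩ := q
  obtain rfl : h = h' := hpq
  have hG0 : 0 < G := by linarith
  have hA : 0 ≤ 2 * log G + c := by linarith [log_nonneg hG]
  -- the height `2 log G + c` of the detour is chosen so that both horizontal moves cost at most 1
  have hcancel (e : ℝ) (he : e = -log G) : G * exp e = 1 := by
    rw [he, exp_neg, exp_log hG0, mul_inv_cancel₀ hG0.ne']
  have hx' : exp (-(h + (2 * log G + c)) / 2) * |x₂ - x₁| ≤ 1 := by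
    refine (mul_le_mul_of_nonneg_left hx (exp_pos _).le).trans_eq ?_
    rw [mul_left_comm, ← exp_add, hcancel]; ring
  have hy' : exp ((h - (2 * log G + c)) / 2) * |y₂ - y₁| ≤ 1 := by
    refine (mul_le_mul_of_nonneg_left hy (exp_pos _).le).trans_eq ?_
    rw [mul_left_comm, ← exp_add, hcancel]; ring
  linarith [dSol_le_of_solHeight_eq x₁ y₁ x₂ y₂ h hA]

end Polygonal

section Chains

variable {p : ℕ → Sol} {n : ℕ} {E H : ℝ} (hstep : ∀ i < n, dSol (p i) (p (i + 1)) < E)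
include hstep

lemma abs_fst_sub_le_of_chain (hz : ∀ i < n, (p i).2.2 ≤ H) :
    |(p n).1 - (p 0).1| ≤ n * (exp ((H + E) / 2) * E) := by
  have := dist_le_range_sum_of_dist_le (f := fun i => (p i).1) n
      (d := fun _ => exp ((H + E) / 2) * E) fun {i} hi => by
    rw [Real.dist_eq, abs_sub_comm]
    exact (abs_fst_sub_le_of_dSol_lt (hstep i hi)).trans <| mul_le_mul_of_nonneg_right
      (exp_le_exp.mpr (by linarith [hz i hi])) ((dSol_nonneg _ _).trans (hstep i hi).le)
  simpa [Real.dist_eq, abs_sub_comm] using this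

lemma abs_snd_sub_le_of_chain (hz : ∀ i < n, H ≤ (p i).2.2) :
    |(p n).2.1 - (p 0).2.1| ≤ n * (exp ((E - H) / 2) * E) := by
  have := dist_le_range_sum_of_dist_le (f := fun i => (p i).2.1) n
      (d := fun _ => exp ((E - H) / 2) * E) fun {i} hi => by
    rw [Real.dist_eq, abs_sub_comm]
    exact (abs_snd_sub_le_of_dSol_lt (hstep i hi)).trans <| mul_le_mul_of_nonneg_right
      (exp_le_exp.mpr (by linarith [hz i hi])) ((dSol_nonneg _ _).trans (hstep i hi).le)
  simpa [Real.dist_eq, abs_sub_comm] using this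

end Chains

lemma exists_nat_div_le {P δ : ℝ} (hP : 0 < P) (hδ : 0 < δ) :
    ∃ n : ℕ, 0 < n ∧ P / n ≤ δ ∧ (n : ℝ) ≤ P / δ + 1 := by
  refine ⟨⌈P / δ⌉₊, Nat.ceil_pos.mpr (by positivity), ?_, (Nat.ceil_lt_add_one (by positivity)).le⟩
  rw [div_le_iff₀ (by positivity), ← div_le_iff₀' hδ]
  exact Nat.le_ceil _

section QuasiGeodesic

variable {K C L : ℝ} {α : ℝ → Sol}

lemma _root_.IsQGeoOn.dist_solHeight_le (hα : IsQGeoOn dSol K C α L) {s t : ℝ}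
    (hs : s ∈ Icc 0 L) (ht : t ∈ Icc 0 L) :
    dist (solHeight (α s)) (solHeight (α t)) ≤ K * dist s t + C := by
  rw [Real.dist_eq, Real.dist_eq, abs_sub_comm]
  exact (abs_solHeight_sub_le_dSol _ _).trans (hα s hs t ht).2

lemma _root_.IsQGeoOn.exists_chain (hα : IsQGeoOn dSol K C α L) (hK : 1 ≤ K) (hC : 0 ≤ C)
    {t₁ t₂ : ℝ} (h0 : 0 ≤ t₁) (h12 : t₁ < t₂) (h2L : t₂ ≤ L) :
    ∃ (n : ℕ) (sp : ℕ → ℝ), (n : ℝ) ≤ t₂ - t₁ + 1 ∧ sp 0 = t₁ ∧ sp n = t₂ ∧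
      (∀ i ≤ n, sp i ∈ Icc t₁ t₂) ∧
      ∀ i < n, dSol (α (sp i)) (α (sp (i + 1))) < (K + 1) * (C + 1) := by
  set P := t₂ - t₁
  have hP : 0 < P := sub_pos.mpr h12
  obtain ⟨n, hn, hstep, hnP⟩ := exists_nat_div_le hP (by linarith : 0 < C + 1)
  have hn' : (0 : ℝ) < n := by exact_mod_cast hn
  set sp : ℕ → ℝ := fun i => t₁ + i * (P / n)
  have hsp (i : ℕ) (hi : i ≤ n) : sp i ∈ Icc t₁ t₂ := by
    have : (i : ℝ) * (P / n) ≤ n * (P / n) := by gcongr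
    rw [mul_div_cancel₀ _ hn'.ne'] at this
    exact ⟨le_add_of_nonneg_right (mul_nonneg (Nat.cast_nonneg i) (div_pos hP hn').le),
      by simp only [sp]; linarith⟩
  have hspL (i : ℕ) (hi : i ≤ n) : sp i ∈ Icc 0 L :=
    ⟨h0.trans (hsp i hi).1, (hsp i hi).2.trans h2L⟩
  refine ⟨n, sp, hnP.trans (by gcongr; exact div_le_self hP.le (by linarith)), by simp [sp],
    by simp [sp, P, mul_div_cancel₀ _ hn'.ne'], hsp, fun i hi => ?_⟩
  have hgap : |sp i - sp (i + 1)| = P / n := by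
    rw [abs_sub_comm, show sp (i + 1) - sp i = P / n by simp only [sp]; push_cast; ring,
      abs_of_nonneg (by positivity)]
  have := (hα _ (hspL i hi.le) _ (hspL (i + 1) hi)).2
  rw [hgap] at this
  nlinarith

lemma _root_.IsQGeoOn.abs_fst_sub_le_and_abs_snd_sub_le (hα : IsQGeoOn dSol K C α L)
    (hK : 1 ≤ K) (hC : 0 ≤ C) {t₁ t₂ h₀ u : ℝ} (h0 : 0 ≤ t₁) (h12 : t₁ < t₂) (h2L : t₂ ≤ L)
    (hz : ∀ s ∈ Icc t₁ t₂, |solHeight (α s) - h₀| ≤ u) :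
    |(α t₂).1 - (α t₁).1| ≤
        (t₂ - t₁ + 1) * ((K + 1) * (C + 1)) * exp ((h₀ + (u + (K + 1) * (C + 1))) / 2) ∧
      |(α t₂).2.1 - (α t₁).2.1| ≤
        (t₂ - t₁ + 1) * ((K + 1) * (C + 1)) * exp ((u + (K + 1) * (C + 1) - h₀) / 2) := by
  obtain ⟨n, sp, hn, hsp0, hspn, hsp, hchain⟩ := hα.exists_chain hK hC h0 h12 h2L
  set E := (K + 1) * (C + 1)
  have hz' (i : ℕ) (hi : i < n) : |(α (sp i)).2.2 - h₀| ≤ u := hz _ (hsp i hi.le)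
  have hnE (c : ℝ) : n * (exp c * E) ≤ (t₂ - t₁ + 1) * E * exp c := by
    calc n * (exp c * E) ≤ (t₂ - t₁ + 1) * (exp c * E) :=
          mul_le_mul_of_nonneg_right hn (by positivity)
      _ = _ := by ring
  constructor
  · have := abs_fst_sub_le_of_chain (p := fun i => α (sp i)) (H := h₀ + u) hchain
      fun i hi => by linarith [(abs_le.mp (hz' i hi)).2]
    simp only [hsp0, hspn, add_assoc] at this
    exact this.trans (hnE _)
  · have := abs_snd_sub_le_of_chain (p := fun i => α (sp i)) (H := h₀ - u) hchain
      fun i hi => by linarith [(abs_le.mp (hz' i hi)).1]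
    simp only [hsp0, hspn, show E - (h₀ - u) = u + E - h₀ by ring] at this
    exact this.trans (hnE _)

def excursionThreshold (K C : ℝ) : ℝ :=
  4 * K * (C + 8 * log ((K + 1) * (C + 1)) + 4 * ((K + 1) * (C + 1)) + 8 * log (32 * K) + 2)

lemma excursionThreshold_pos (hK : 1 ≤ K) (hC : 0 ≤ C) : 0 < excursionThreshold K C := by
  have h32 : 0 ≤ log (32 * K) := log_nonneg (by linarith)
  have hE : 0 ≤ log ((K + 1) * (C + 1)) := log_nonneg (by nlinarith)
  unfold excursionThreshold
  have : 0 < C + 8 * log ((K + 1) * (C + 1)) + 4 * ((K + 1) * (C + 1)) + 8 * log (32 * K) + 2 := by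
    nlinarith
  positivity

/-- Beyond the threshold, the lower quasi-geodesic bound `P / K - C` beats the length of the
detour path, which grows only like `P / (2K) + 8 log P`. -/
lemma add_lt_of_excursionThreshold_le (hK : 1 ≤ K) (hC : 0 ≤ C) {P : ℝ}
    (hP : excursionThreshold K C ≤ P) :
    4 * (2 * log ((P + 1) * ((K + 1) * (C + 1))) + (P / (8 * K) + (K + 1) * (C + 1))) + 2 <
      P / K - C := by
  set E := (K + 1) * (C + 1)
  have hK0 : 0 < K := by linarith
  have hE : 0 < E := by positivity
  have hP0 : 0 < P := (excursionThreshold_pos hK hC).trans_le hP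
  have hlog : log (P + 1) ≤ log (32 * K) + (P + 1) / (32 * K) - 1 := by
    have := log_le_sub_one_of_pos (x := (P + 1) / (32 * K)) (by positivity)
    rw [log_div (by positivity) (by positivity)] at this
    linarith
  have hQ : 4 * (C + 8 * log E + 4 * E + 8 * log (32 * K) + 2) ≤ P / K :=
    (le_div_iff₀ hK0).mpr (by unfold excursionThreshold at hP; linarith)
  have h1 : (P + 1) / (32 * K) ≤ P / K / 32 + 1 / 32 := by
    rw [show (P + 1) / (32 * K) = P / K / 32 + 1 / (32 * K) by field_simp]
    gcongr
    linarith
  rw [log_mul (by positivity) hE.ne', show P / (8 * K) = P / K / 8 by ring]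
  linarith

lemma _root_.IsQGeoOn.exists_abs_solHeight_sub_ge (hα : IsQGeoOn dSol K C α L) (hK : 1 ≤ K)
    (hC : 0 ≤ C) {t₁ t₂ : ℝ} (h0 : 0 ≤ t₁) (h2L : t₂ ≤ L)
    (hh : solHeight (α t₂) = solHeight (α t₁)) (hP : excursionThreshold K C ≤ t₂ - t₁) :
    ∃ s ∈ Icc t₁ t₂, (t₂ - t₁) / (8 * K) ≤ |solHeight (α s) - solHeight (α t₁)| := by
  by_contra! hnear
  have hP0 : 0 < t₂ - t₁ := (excursionThreshold_pos hK hC).trans_le hP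
  obtain ⟨hx, hy⟩ := hα.abs_fst_sub_le_and_abs_snd_sub_le hK hC h0 (by linarith) h2L
    fun s hs => (hnear s hs).le
  have hG : 1 ≤ (t₂ - t₁ + 1) * ((K + 1) * (C + 1)) := one_le_mul_of_one_le_of_one_le
    (by linarith) (one_le_mul_of_one_le_of_one_le (by linarith) (by linarith))
  have hup := dSol_le_of_abs_sub_le hh.symm hG (by positivity) hx hy
  have hlow := (hα t₁ ⟨h0, by linarith⟩ t₂ ⟨by linarith, h2L⟩).1
  rw [abs_sub_comm, abs_of_pos hP0, one_div_mul_eq_div] at hlow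
  linarith [add_lt_of_excursionThreshold_le hK hC hP]

end QuasiGeodesic

section Variation

lemma sum_range_mul_eq_sum_sum_Ico {M : Type*} [AddCommMonoid M] (f : ℕ → M) (N k : ℕ) :
    ∑ i ∈ Finset.range (N * k), f i =
      ∑ j ∈ Finset.range N, ∑ i ∈ Finset.Ico (j * k) (j * k + k), f i := by
  induction N with
  | zero => simp
  | succ N ih =>
    rw [Finset.sum_range_succ, ← ih, Nat.succ_mul, Finset.sum_range_add_sum_Ico _ (by omega)]

lemma sum_Icc_sub_eq (f : ℕ → ℝ) (M : ℕ) : ∑ m ∈ Finset.Icc 1 M, (f (m - 1) - f m) = f 0 - f M := by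
  induction M with
  | zero => simp
  | succ M ih => rw [Finset.sum_Icc_succ_top (by omega), ih, Nat.add_sub_cancel]; ring

variable {X : Type*} [PseudoMetricSpace X] (f : ℕ → X) {a i j k b : ℕ}

lemma dist_add_dist_add_dist_le_sum_Ico (hai : a ≤ i) (hij : i ≤ j) (hjk : j ≤ k) (hkb : k ≤ b) :
    dist (f a) (f b) + dist (f i) (f j) + dist (f j) (f k) ≤
      ∑ l ∈ Finset.Ico a b, dist (f l) (f (l + 1)) + dist (f i) (f k) := by
  rw [← Finset.sum_Ico_consecutive _ hai (hij.trans (hjk.trans hkb)),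
    ← Finset.sum_Ico_consecutive _ hij (hjk.trans hkb), ← Finset.sum_Ico_consecutive _ hjk hkb]
  linarith [dist_triangle4 (f a) (f i) (f k) (f b), dist_le_Ico_sum_dist f hai,
    dist_le_Ico_sum_dist f hij, dist_le_Ico_sum_dist f hjk, dist_le_Ico_sum_dist f hkb]

lemma add_le_sum_Ico_of_detour (hai : a ≤ i) (hij : i ≤ j) (hjk : j ≤ k) (hkb : k ≤ b)
    {y₁ y₂ : X} {w D : ℝ} (h₁ : dist (f i) y₁ ≤ w) (h₂ : dist (f j) y₂ ≤ w)
    (h₃ : dist (f k) y₁ ≤ w) (hD : D ≤ dist y₁ y₂) (hw : 6 * w ≤ D) :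
    dist (f a) (f b) + D ≤ ∑ l ∈ Finset.Ico a b, dist (f l) (f (l + 1)) := by
  have := dist_add_dist_add_dist_le_sum_Ico f hai hij hjk hkb
  linarith [dist_triangle4 y₁ (f i) (f j) y₂, dist_triangle4 y₁ (f k) (f j) y₂,
    dist_triangle4 (f i) y₁ y₁ (f k), dist_comm y₁ (f i), dist_comm y₁ (f k), dist_comm (f k) (f j),
    dist_self y₁]

end Variation

section Scales

variable {r : ℕ → ℝ} {M : ℕ} (hdiv : ∀ m, 1 ≤ m → m ≤ M → ∃ k : ℕ, r m = k * r (m - 1))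
include hdiv

lemma le_of_scales (hr : ∀ m ≤ M, 0 < r m) {m : ℕ} (hm : m ≤ M) : r 0 ≤ r m := by
  induction m with
  | zero => rfl
  | succ m ih =>
    obtain ⟨k, hrk⟩ := hdiv (m + 1) (by omega) hm
    rw [Nat.add_sub_cancel] at hrk
    have hk : (1 : ℝ) ≤ k := by
      have : k ≠ 0 := by rintro rfl; simpa [hrk] using hr (m + 1) hm
      exact_mod_cast Nat.one_le_iff_ne_zero.mpr this
    nlinarith [ih (by omega), hr m (by omega)]

lemma exists_nat_eq_mul_of_scales {L : ℝ} (hL : ∃ N : ℕ, L = N * r M) {m : ℕ} (hm : m ≤ M) :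
    ∃ N : ℕ, L = N * r m := by
  refine Nat.decreasingInduction (motive := fun m _ => ∃ N : ℕ, L = N * r m)
    (fun m hmM ⟨N, hN⟩ => ?_) hL hm
  obtain ⟨k, hrk⟩ := hdiv (m + 1) (by omega) hmM
  rw [Nat.add_sub_cancel] at hrk
  exact ⟨N * k, by rw [hN, hrk]; push_cast; ring⟩

end Scales

section SampledHeight

def heightVariation (α : ℝ → Sol) (ρ L : ℝ) : ℝ :=
  ∑ i ∈ Finset.range ⌊L / ρ⌋₊, dist (solHeight (α (i * ρ))) (solHeight (α ((i + 1 : ℕ) * ρ)))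

def nonMonotoneBlocks (α : ℝ → Sol) (ε ρ L : ℝ) : Set ℕ :=
  {j : ℕ | (j : ℝ) < L / ρ ∧ ¬ EpsMonotoneOn α ε (j * ρ) ((j + 1) * ρ)}

lemma exists_of_not_epsMonotoneOn {α : ℝ → Sol} {ε a b : ℝ} (h : ¬ EpsMonotoneOn α ε a b) :
    ∃ u₁ ∈ Icc a b, ∃ u₂ ∈ Icc a b, u₁ ≤ u₂ ∧ solHeight (α u₂) = solHeight (α u₁) ∧
      ε * (b - a) ≤ u₂ - u₁ := by
  simp only [EpsMonotoneOn, not_forall, not_lt] at h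
  obtain ⟨t₁, ht₁, t₂, ht₂, heq, hfar⟩ := h
  rcases le_total t₁ t₂ with h12 | h21
  · exact ⟨t₁, ht₁, t₂, ht₂, h12, heq.symm,
      by rwa [abs_sub_comm, abs_of_nonneg (by linarith)] at hfar⟩
  · exact ⟨t₂, ht₂, t₁, ht₁, h21, heq, by rwa [abs_of_nonneg (by linarith)] at hfar⟩

lemma floor_div_mem_Icc {ρ t : ℝ} (hρ : 0 < ρ) {m k : ℕ} (ht : t ∈ Icc (m * ρ) ((m + k : ℕ) * ρ)) :
    ⌊t / ρ⌋₊ ∈ Icc m (m + k) :=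
  ⟨Nat.le_floor ((le_div_iff₀ hρ).mpr ht.1), Nat.floor_le_of_le ((div_le_iff₀ hρ).mpr ht.2)⟩

variable {K C L : ℝ} {α : ℝ → Sol}

lemma _root_.IsQGeoOn.dist_solHeight_floor_le (hα : IsQGeoOn dSol K C α L) (hK : 0 ≤ K)
    {ρ t : ℝ} (hρ : 0 < ρ) (ht : t ∈ Icc 0 L) :
    dist (solHeight (α (⌊t / ρ⌋₊ * ρ))) (solHeight (α t)) ≤ K * ρ + C := by
  have hle : ⌊t / ρ⌋₊ * ρ ≤ t := (le_div_iff₀ hρ).mp (Nat.floor_le (div_nonneg ht.1 hρ.le))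
  have hlt : t < (⌊t / ρ⌋₊ + 1) * ρ := (div_lt_iff₀ hρ).mp (Nat.lt_floor_add_one _)
  refine (hα.dist_solHeight_le ⟨by positivity, hle.trans ht.2⟩ ht).trans ?_
  rw [Real.dist_eq, abs_sub_comm, abs_of_nonneg (by linarith)]
  gcongr
  linarith

lemma dist_add_le_sum_of_not_epsMonotoneOn (hα : IsQGeoOn dSol K C α L) (hK : 1 ≤ K)
    (hC : 0 ≤ C) {ε ρ : ℝ} (hε : 0 < ε) (hρ : 0 < ρ) {k j : ℕ} (hk : 96 * K ^ 2 / ε ≤ k)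
    (hCk : 96 * K * C ≤ ε * (k * ρ)) (hPk : excursionThreshold K C ≤ ε * (k * ρ))
    (hjL : (j + 1) * (k * ρ) ≤ L) (hbad : ¬ EpsMonotoneOn α ε (j * (k * ρ)) ((j + 1) * (k * ρ))) :
    dist (solHeight (α (j * (k * ρ)))) (solHeight (α ((j + 1 : ℕ) * (k * ρ)))) +
        ε * (k * ρ) / (8 * K) ≤
      ∑ l ∈ Finset.Ico (j * k) (j * k + k),
        dist (solHeight (α (l * ρ))) (solHeight (α ((l + 1 : ℕ) * ρ))) := by
  have hK0 : 0 < K := by linarith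
  obtain ⟨u₁, hu₁, u₂, hu₂, h12, heq, hsep⟩ := exists_of_not_epsMonotoneOn hbad
  rw [show (j + 1) * (k * ρ) - j * (k * ρ) = k * ρ by ring] at hsep
  have hblock : Icc ((j : ℝ) * (k * ρ)) ((j + 1) * (k * ρ)) =
      Icc (((j * k : ℕ) : ℝ) * ρ) ((j * k + k : ℕ) * ρ) := by push_cast; ring_nf
  have hsub : Icc ((j : ℝ) * (k * ρ)) ((j + 1) * (k * ρ)) ⊆ Icc 0 L :=
    Icc_subset_Icc (by positivity) hjL
  obtain ⟨s, hs, hfar⟩ := hα.exists_abs_solHeight_sub_ge hK hC (hsub hu₁).1 (hsub hu₂).2 heq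
    (hPk.trans (by linarith))
  have hsu : s ∈ Icc ((j : ℝ) * (k * ρ)) ((j + 1) * (k * ρ)) := ⟨hu₁.1.trans hs.1, hs.2.trans hu₂.2⟩
  have hidx (t : ℝ) (ht : t ∈ Icc ((j : ℝ) * (k * ρ)) ((j + 1) * (k * ρ))) :=
    floor_div_mem_Icc hρ (hblock ▸ ht)
  have hnear (t : ℝ) (ht : t ∈ Icc ((j : ℝ) * (k * ρ)) ((j + 1) * (k * ρ))) :=
    hα.dist_solHeight_floor_le hK0.le hρ (hsub ht)
  -- sampling at `u₁`, `s`, `u₂` loses `6 (K ρ + C)`; this is where `96 = 6 · 16` comes from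
  have hw : 6 * (K * ρ + C) ≤ ε * (k * ρ) / (8 * K) := by
    rw [le_div_iff₀ (by positivity)]
    have : 96 * K ^ 2 * ρ ≤ ε * (k * ρ) := by
      rw [div_le_iff₀' hε] at hk
      nlinarith
    nlinarith
  have hD : ε * (k * ρ) / (8 * K) ≤ dist (solHeight (α u₁)) (solHeight (α s)) := by
    rw [Real.dist_eq, abs_sub_comm]
    exact le_trans (by gcongr) hfar
  have hends (m : ℕ) : ((m * k : ℕ) : ℝ) * ρ = m * (k * ρ) := by push_cast; ring
  have key := add_le_sum_Ico_of_detour (fun l : ℕ => solHeight (α (l * ρ))) (hidx u₁ hu₁).1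
    (Nat.floor_le_floor (div_le_div_of_nonneg_right hs.1 hρ.le))
    (Nat.floor_le_floor (div_le_div_of_nonneg_right hs.2 hρ.le)) (hidx u₂ hu₂).2
    (hnear u₁ hu₁) (hnear s hsu) ((hnear u₂ hu₂).trans_eq' (by rw [heq]))
    hD hw
  simpa only [hends, show j * k + k = (j + 1) * k by ring] using key

open Classical in
lemma ncard_nonMonotoneBlocks_mul {ε ρ : ℝ} (hρ : 0 < ρ) (N : ℕ) (D : ℝ) :
    (nonMonotoneBlocks α ε ρ (N * ρ)).ncard * D =
      ∑ j ∈ Finset.range N, if ¬ EpsMonotoneOn α ε (j * ρ) ((j + 1) * ρ) then D else 0 := by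
  rw [← Finset.sum_filter, Finset.sum_const, nsmul_eq_mul, ← Set.ncard_coe_finset]
  congr 3
  ext j
  simp [nonMonotoneBlocks, mul_div_cancel_right₀ _ hρ.ne']

lemma heightVariation_add_le (hα : IsQGeoOn dSol K C α L) (hK : 1 ≤ K) (hC : 0 ≤ C) {ε ρ : ℝ}
    (hε : 0 < ε) (hρ : 0 < ρ) {k N : ℕ} (hk : 96 * K ^ 2 / ε ≤ k)
    (hCk : 96 * K * C ≤ ε * (k * ρ)) (hPk : excursionThreshold K C ≤ ε * (k * ρ))
    (hL : L = N * (k * ρ)) :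
    heightVariation α (k * ρ) L + (nonMonotoneBlocks α ε (k * ρ) L).ncard * (ε * (k * ρ) / (8 * K))
      ≤ heightVariation α ρ L := by
  classical
  have hk0 : (0 : ℝ) < k := hk.trans_lt' (div_pos (by nlinarith) hε)
  have hkρ : 0 < (k : ℝ) * ρ := by positivity
  have hfloor : ⌊L / ρ⌋₊ = N * k := by
    rw [hL, ← mul_assoc, mul_div_cancel_right₀ _ hρ.ne']; exact_mod_cast Nat.floor_natCast _
  have hfloor' : ⌊L / (k * ρ)⌋₊ = N := by
    rw [hL, mul_div_cancel_right₀ _ hkρ.ne', Nat.floor_natCast]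
  rw [heightVariation, heightVariation, hfloor, hfloor', sum_range_mul_eq_sum_sum_Ico, hL,
    ncard_nonMonotoneBlocks_mul hkρ, ← Finset.sum_add_distrib]
  refine Finset.sum_le_sum fun j hj => ?_
  have hjL : (j + 1) * (k * ρ) ≤ L := by
    rw [hL]; gcongr; exact_mod_cast Finset.mem_range.mp hj
  split_ifs with hmono
  · have := dist_le_Ico_sum_dist (fun l : ℕ => solHeight (α (l * ρ))) (Nat.le_add_right (j * k) k)
    simpa only [add_zero, show ((j * k : ℕ) : ℝ) * ρ = j * (k * ρ) by push_cast; ring,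
      show (((j * k + k : ℕ)) : ℝ) * ρ = (j + 1 : ℕ) * (k * ρ) by push_cast; ring] using this
  · exact dist_add_le_sum_of_not_epsMonotoneOn hα hK hC hε hρ hk hCk hPk hjL hmono

lemma heightVariation_le (hα : IsQGeoOn dSol K C α L) {ρ : ℝ} (hρ : 0 < ρ) {N : ℕ}
    (hL : L = N * ρ) : heightVariation α ρ L ≤ N * (K * ρ + C) := by
  rw [heightVariation, hL, mul_div_cancel_right₀ _ hρ.ne', Nat.floor_natCast]
  calc ∑ i ∈ Finset.range N, dist (solHeight (α (i * ρ))) (solHeight (α ((i + 1 : ℕ) * ρ)))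
      ≤ ∑ _i ∈ Finset.range N, (K * ρ + C) := Finset.sum_le_sum fun i hi => by
        have hiN := Finset.mem_range.mp hi
        have hρ' : dist ((i : ℝ) * ρ) ((i + 1 : ℕ) * ρ) = ρ := by
          rw [Real.dist_eq, show (i : ℝ) * ρ - (i + 1 : ℕ) * ρ = -ρ by push_cast; ring, abs_neg,
            abs_of_pos hρ]
        refine (hα.dist_solHeight_le ⟨by positivity, ?_⟩ ⟨by positivity, ?_⟩).trans_eq
          (by rw [hρ'])
        · rw [hL]; gcongr
        · rw [hL]; gcongr; omega
    _ = N * (K * ρ + C) := by rw [Finset.sum_const, Finset.card_range, nsmul_eq_mul]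

lemma sum_ncard_mul_le_heightVariation (hα : IsQGeoOn dSol K C α L) (hK : 1 ≤ K) (hC : 0 ≤ C)
    {ε : ℝ} (hε : 0 < ε) {r : ℕ → ℝ} {M : ℕ} (hr : ∀ m ≤ M, 0 < r m)
    (hdiv : ∀ m, 1 ≤ m → m ≤ M → ∃ k : ℕ, 96 * K ^ 2 / ε ≤ k ∧ r m = k * r (m - 1))
    (hlarge : ∀ m ≤ M, excursionThreshold K C + 96 * K * C ≤ ε * r m)
    (hL : ∃ N : ℕ, L = N * r M) :
    ∑ m ∈ Finset.Icc 1 M, (nonMonotoneBlocks α ε (r m) L).ncard * (ε * r m / (8 * K)) ≤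
      heightVariation α (r 0) L := by
  have hdiv' (m : ℕ) (h1 : 1 ≤ m) (hmM : m ≤ M) : ∃ k : ℕ, r m = k * r (m - 1) :=
    (hdiv m h1 hmM).imp fun _ => And.right
  have hstep (m : ℕ) (hm : m ∈ Finset.Icc 1 M) :
      (nonMonotoneBlocks α ε (r m) L).ncard * (ε * r m / (8 * K)) ≤
        heightVariation α (r (m - 1)) L - heightVariation α (r m) L := by
    obtain ⟨hm1, hmM⟩ := Finset.mem_Icc.mp hm
    obtain ⟨k, hk, hrk⟩ := hdiv m hm1 hmM
    obtain ⟨N, hN⟩ := exists_nat_eq_mul_of_scales hdiv' hL hmM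
    have hthr := excursionThreshold_pos hK hC
    have hKC : 0 ≤ 96 * K * C := by positivity
    have := heightVariation_add_le hα hK hC hε (hr (m - 1) (by omega)) hk
      (by rw [← hrk]; linarith [hlarge m hmM]) (by rw [← hrk]; linarith [hlarge m hmM])
      (by rw [← hrk]; exact hN)
    rw [← hrk] at this
    linarith
  have hVM : 0 ≤ heightVariation α (r M) L := Finset.sum_nonneg fun _ _ => dist_nonneg
  calc _ ≤ ∑ m ∈ Finset.Icc 1 M, (heightVariation α (r (m - 1)) L - heightVariation α (r m) L) :=
        Finset.sum_le_sum hstep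
    _ ≤ heightVariation α (r 0) L := by
        rw [sum_Icc_sub_eq (fun m => heightVariation α (r m) L)]; linarith

lemma heightVariation_le_two_mul (hα : IsQGeoOn dSol K C α L) (hK : 1 ≤ K) {ρ : ℝ} (hρ : 0 < ρ)
    (hCρ : C ≤ ρ) (hL : ∃ N : ℕ, L = N * ρ) : heightVariation α ρ L ≤ 2 * K * L := by
  obtain ⟨N, hN⟩ := hL
  refine (heightVariation_le hα hρ hN).trans ?_
  rw [hN]
  have hN0 : (0 : ℝ) ≤ N := N.cast_nonneg
  nlinarith [mul_le_mul_of_nonneg_left hCρ hN0, mul_le_mul_of_nonneg_left hK (mul_nonneg hN0 hρ.le)]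

end SampledHeight


end SolScales

open SolScales

/-- **Scales Lemma for `Sol`.** Given scales `r₀ ≤ r₁ ≤ … ≤ r_M`, each dividing the next with
large ratio, and a `(K,C)`-quasi-geodesic `α : [0,L] → Sol` with `r_M ∣ L`, the fractions
`δ_m(α)` of the subsegments of length `r_m` on which `α` is not `ε`-monotone satisfy
`∑ δ_m(α) ≤ 16K³/ε`. -/
theorem sol_scales :
    ∀ K C ε : ℝ, 1 ≤ K → 0 ≤ C → 0 < ε →
      ∃ (n₀ : ℕ) (rstar : ℝ), 0 < n₀ ∧ 0 < rstar ∧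
        ∀ (M : ℕ) (r : ℕ → ℝ) (L : ℝ),
          (∀ m ≤ M, 0 < r m) →
          rstar ≤ r 0 →
          (∀ m, 1 ≤ m → m ≤ M → ∃ k : ℕ, n₀ ≤ k ∧ r m = k * r (m - 1)) →
          (∃ N : ℕ, 0 < N ∧ L = N * r M) →
          ∀ α : ℝ → ℝ × ℝ × ℝ, IsQGeoOn dSol K C α L →
            ∑ m ∈ Finset.Icc 1 M,
              (r m / L) *
                (Set.ncard {j : ℕ | (j : ℝ) < L / r m ∧
                  ¬ EpsMonotoneOn α ε (j * r m) ((j + 1) * r m)} : ℝ)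
              ≤ 16 * K ^ 3 / ε := by
  intro K C ε hK hC hε
  have hq : 0 < (excursionThreshold K C + 96 * K * C) / ε :=
    div_pos (add_pos_of_pos_of_nonneg (excursionThreshold_pos hK hC) (by positivity)) hε
  refine ⟨⌈96 * K ^ 2 / ε⌉₊ + 1, (excursionThreshold K C + 96 * K * C) / ε + C + 1,
    Nat.succ_pos _, by linarith, ?_⟩
  intro M r L hr hr0 hdiv hL α hα
  have hdiv₀ (m : ℕ) (h1 : 1 ≤ m) (hmM : m ≤ M) : ∃ k : ℕ, r m = k * r (m - 1) :=
    (hdiv m h1 hmM).imp fun _ => And.right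
  have hdiv' (m : ℕ) (h1 : 1 ≤ m) (hmM : m ≤ M) :
      ∃ k : ℕ, 96 * K ^ 2 / ε ≤ k ∧ r m = k * r (m - 1) :=
    (hdiv m h1 hmM).imp fun _ hk =>
      ⟨(Nat.le_ceil _).trans (mod_cast (Nat.le_succ _).trans hk.1), hk.2⟩
  have hr0m {m : ℕ} (hm : m ≤ M) := hr0.trans (le_of_scales hdiv₀ hr hm)
  obtain ⟨N, hN, hLN⟩ := hL
  have hL0 : 0 < L := hLN ▸ mul_pos (by exact_mod_cast hN) (hr M le_rfl)
  have hsum := sum_ncard_mul_le_heightVariation hα hK hC hε hr hdiv'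
    (fun m hm => (div_le_iff₀' hε).mp (by linarith [hr0m hm])) ⟨N, hLN⟩
  have hV0 := heightVariation_le_two_mul hα hK (hr 0 M.zero_le) (by linarith [hr0m M.zero_le])
    (exists_nat_eq_mul_of_scales hdiv₀ ⟨N, hLN⟩ M.zero_le)
  calc ∑ m ∈ Finset.Icc 1 M, r m / L * ((nonMonotoneBlocks α ε (r m) L).ncard : ℝ)
      = 8 * K / (ε * L) *
          ∑ m ∈ Finset.Icc 1 M, (nonMonotoneBlocks α ε (r m) L).ncard * (ε * r m / (8 * K)) := by
        rw [Finset.mul_sum]; congr! 1; field_simp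
    _ ≤ 8 * K / (ε * L) * (2 * K * L) := by gcongr; linarith
    _ = 16 * K ^ 2 / ε := by field_simp; ring
    _ ≤ 16 * K ^ 3 / ε := by gcongr; nlinarith
end
end

section
/- Scales Lemma II: let Y be a metric space, K ≥ 1, C ≥ 0 and ε > 0. Let r₀ ≤ r₁ ≤ … ≤ r_M be positive reals with r₀ ≥ 2KC, with r_{m−1} dividing r_m for 1 ≤ m ≤ M, and let L be a positive multiple of r_M. For a (K,C)-quasi-geodesic segment α : [0,L] → Y and 1 ≤ m ≤ M, let δ_m(α) = (r_m/L)·#{ j : 0 ≤ j < L/r_m and the restriction of α to [j·r_m, (j+1)·r_m] is not ε-efficient on scale r_{m−1} }, where the restriction to [j·r_m, (j+1)·r_m] is ε-efficient on scale r_{m−1} if Σ_{i=1}^{r_m/r_{m−1}} d(α(j·r_m + i·r_{m−1}), α(j·r_m + (i−1)·r_{m−1})) ≤ (1+ε)·d(α(j·r_m), α((j+1)·r_m)). Then Σ_{m=1}^{M} δ_m(α) ≤ 4K²/ε. -/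
/-!
On each scale `r_m` consider the length `S_m` of the inscribed polygon through the points
`α (j r_m)`. Refining scale `r_m` to `r_{m-1}` never shortens it (triangle inequality), and on a
block that is not `ε`-efficient it gains more than `ε` times the block's displacement, which is at
least `r_m / K - C ≥ r_m / (2K)` because `r_m ≥ r_0 ≥ 2KC`. The gains over all scales thus add up
to at most `S_0 ≤ L (K + 1/(2K))`, which is `≤ 2K² L`.
-/

noncomputable section

/-- `α` is a `(K,C)`-quasi-geodesic segment on `[0, L]` in the metric space `Y`. -/
def IsQGeoOnM {Y : Type*} [MetricSpace Y] (K C : ℝ) (α : ℝ → Y) (L : ℝ) : Prop :=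
  ∀ s ∈ Set.Icc (0:ℝ) L, ∀ t ∈ Set.Icc (0:ℝ) L,
    (1 / K) * |s - t| - C ≤ dist (α s) (α t) ∧ dist (α s) (α t) ≤ K * |s - t| + C

open Finset

lemma Finset.sum_range_mul_eq_sum_sum {β : Type*} [AddCommMonoid β] (f : ℕ → β) (n k : ℕ) :
    ∑ i ∈ range (n * k), f i = ∑ j ∈ range n, ∑ i ∈ range k, f (j * k + i) := by
  induction n with
  | zero => simp
  | succ n ih => rw [Nat.succ_mul, sum_range_add, ih, sum_range_succ]

lemma sum_Icc_le_sub_of_add_le {S c : ℕ → ℝ} {M : ℕ}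
    (h : ∀ m ∈ Icc 1 M, S m + c m ≤ S (m - 1)) : ∑ m ∈ Icc 1 M, c m ≤ S 0 - S M := by
  induction M with
  | zero => simp
  | succ M ih =>
    rw [sum_Icc_succ_top (by omega)]
    have hM := h (M + 1) (by simp)
    have := ih fun m hm ↦ h m (Icc_subset_Icc_right (by omega) hm)
    simp only [Nat.add_sub_cancel] at hM
    linarith

lemma Set.ncard_setOf_natCast_lt_and (n : ℕ) (P : ℕ → Prop) [DecidablePred P] :
    {j : ℕ | (j : ℝ) < n ∧ P j}.ncard = #{j ∈ Finset.range n | P j} := by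
  rw [← Set.ncard_coe_finset]
  congr
  ext j
  simp

section Chains

variable {Y : Type*} [MetricSpace Y]

/-- The length of the polygon through `α a, α (a + s), …, α (a + n s)`. -/
def chainLength (α : ℝ → Y) (a s : ℝ) (n : ℕ) : ℝ :=
  ∑ i ∈ range n, dist (α (a + (i + 1) * s)) (α (a + i * s))

lemma dist_le_chainLength (α : ℝ → Y) (a s : ℝ) (n : ℕ) :
    dist (α a) (α (a + n * s)) ≤ chainLength α a s n := by
  have h := dist_le_range_sum_dist (fun i : ℕ ↦ α (a + i * s)) n
  simp only [Nat.cast_zero, zero_mul, add_zero, Nat.cast_add, Nat.cast_one] at h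
  simpa only [chainLength, dist_comm] using h

lemma chainLength_mul (α : ℝ → Y) (a s : ℝ) (n k : ℕ) :
    chainLength α a s (n * k) = ∑ j ∈ range n, chainLength α (a + j * (k * s)) s k := by
  unfold chainLength
  rw [sum_range_mul_eq_sum_sum]
  refine sum_congr rfl fun j _ ↦ sum_congr rfl fun i _ ↦ ?_
  push_cast
  ring_nf

/-- The indices `j < n` such that `α` restricted to `[j t, (j + 1) t]` is not `ε`-efficient on
scale `s`, measured with `k` steps of length `s`. -/
def inefficientBlocks (α : ℝ → Y) (ε s t : ℝ) (k n : ℕ) : Finset ℕ :=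
  (range n).filter fun j : ℕ ↦
    ¬ chainLength α (j * t) s k ≤ (1 + ε) * dist (α (j * t)) (α ((j + 1) * t))

theorem chainLength_add_mul_card_inefficientBlocks_le {α : ℝ → Y} {s t ε D : ℝ} {k n : ℕ}
    (ht : t = k * s) (hε : 0 ≤ ε) (hD : ∀ j < n, D ≤ dist (α (j * t)) (α ((j + 1) * t))) :
    chainLength α 0 t n + ε * D * #(inefficientBlocks α ε s t k n) ≤ chainLength α 0 s (n * k) := by
  rw [inefficientBlocks, chainLength_mul, natCast_card_filter, mul_sum, chainLength,
    ← sum_add_distrib]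
  refine sum_le_sum fun j hj ↦ ?_
  have hchain : dist (α (j * t)) (α ((j + 1) * t)) ≤ chainLength α (j * t) s k := by
    simpa only [ht, add_mul, one_mul] using dist_le_chainLength α (j * t) s k
  simp only [zero_add, ← ht, dist_comm (α ((j + 1) * t))]
  by_cases hefficient : chainLength α (j * t) s k ≤ (1 + ε) * dist (α (j * t)) (α ((j + 1) * t))
  · simpa [hefficient] using hchain
  · simp only [hefficient, not_false_eq_true, if_true, mul_one]
    nlinarith [hD j (mem_range.mp hj)]

lemma succ_mul_le_of_lt {t L : ℝ} {j n : ℕ} (ht : 0 ≤ t) (hn : n * t ≤ L) (hj : j < n) :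
    ((j : ℝ) + 1) * t ≤ L := by
  have : (j : ℝ) + 1 ≤ n := by exact_mod_cast hj
  nlinarith

namespace IsQGeoOnM

variable {K C L t : ℝ} {α : ℝ → Y}

lemma block_bounds (hα : IsQGeoOnM K C α L) (ht : 0 ≤ t) {j : ℕ} (hj : (j + 1) * t ≤ L) :
    (1 / K) * t - C ≤ dist (α (j * t)) (α ((j + 1) * t)) ∧
      dist (α (j * t)) (α ((j + 1) * t)) ≤ K * t + C := by
  have hjt : (j : ℝ) * t ≤ (j + 1) * t := by nlinarith
  have h := hα (j * t) ⟨by positivity, hjt.trans hj⟩ ((j + 1) * t) ⟨by positivity, hj⟩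
  rwa [show (j : ℝ) * t - (j + 1) * t = -t by ring, abs_neg, abs_of_nonneg ht] at h

lemma div_two_mul_le_dist_block (hα : IsQGeoOnM K C α L) (hK : 0 < K) (hCt : 2 * K * C ≤ t)
    (ht : 0 ≤ t) {j : ℕ} (hj : (j + 1) * t ≤ L) :
    t / (2 * K) ≤ dist (α (j * t)) (α ((j + 1) * t)) := by
  have hC : C ≤ t / (2 * K) := by rw [le_div_iff₀ (by positivity)]; linarith
  have : 1 / K * t = t / (2 * K) + t / (2 * K) := by field_simp; ring
  linarith [(hα.block_bounds ht hj).1]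

lemma chainLength_le (hα : IsQGeoOnM K C α L) (hK : 0 < K) (hCt : 2 * K * C ≤ t) (ht : 0 ≤ t)
    {n : ℕ} (hn : n * t = L) : chainLength α 0 t n ≤ L * (K + 1 / (2 * K)) := by
  have hC : C ≤ t / (2 * K) := by rw [le_div_iff₀ (by positivity)]; linarith
  have hblock : ∀ j ∈ range n, dist (α (0 + (j + 1) * t)) (α (0 + j * t)) ≤ K * t + C :=
    fun j hj ↦ by
      simpa only [zero_add, dist_comm] using
        (hα.block_bounds ht (succ_mul_le_of_lt ht hn.le (mem_range.mp hj))).2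
  calc chainLength α 0 t n ≤ #(range n) • (K * t + C) := sum_le_card_nsmul _ _ _ hblock
    _ ≤ n * (K * t + t / (2 * K)) := by rw [card_range, nsmul_eq_mul]; gcongr
    _ = L * (K + 1 / (2 * K)) := by rw [← hn]; field_simp

theorem chainLength_add_card_inefficientBlocks_le (hα : IsQGeoOnM K C α L) (hK : 0 < K) {ε s : ℝ}
    (hε : 0 ≤ ε) {k n : ℕ} (hts : t = k * s) (hCt : 2 * K * C ≤ t) (ht : 0 ≤ t) (hn : n * t = L) :
    chainLength α 0 t n + ε * (t / (2 * K)) * #(inefficientBlocks α ε s t k n)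
      ≤ chainLength α 0 s (n * k) :=
  chainLength_add_mul_card_inefficientBlocks_le hts hε fun _ hj ↦
    hα.div_two_mul_le_dist_block hK hCt ht (succ_mul_le_of_lt ht hn.le hj)

end IsQGeoOnM

end Chains

section Scales

variable {r : ℕ → ℝ} {k : ℕ → ℕ} {M : ℕ}

lemma scale_zero_le (hpos : ∀ m ≤ M, 0 < r m)
    (hdvd : ∀ m, 1 ≤ m → m ≤ M → r m = k m * r (m - 1)) {m : ℕ} (hm : m ≤ M) : r 0 ≤ r m := by
  induction m with
  | zero => rfl
  | succ m ih =>
    have hrec : r (m + 1) = k (m + 1) * r m := hdvd (m + 1) (by omega) hm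
    have hk : k (m + 1) ≠ 0 := by
      intro h
      have := hpos (m + 1) hm
      simp [hrec, h] at this
    have : (1 : ℝ) ≤ k (m + 1) := by exact_mod_cast Nat.one_le_iff_ne_zero.mpr hk
    nlinarith [ih (by omega), hpos m (by omega)]

lemma exists_natCast_mul_scale_eq (hdvd : ∀ m, 1 ≤ m → m ≤ M → r m = k m * r (m - 1))
    {L : ℝ} {N : ℕ} (hL : L = N * r M) {m : ℕ} (hm : m ≤ M) : ∃ n : ℕ, (n : ℝ) * r m = L := by
  refine Nat.decreasingInduction (motive := fun m _ ↦ ∃ n : ℕ, (n : ℝ) * r m = L)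
    (fun m hm ih ↦ ?_) ⟨N, hL.symm⟩ hm
  obtain ⟨n, hn⟩ := ih
  refine ⟨n * k (m + 1), ?_⟩
  rw [← hn, hdvd (m + 1) (by omega) hm, Nat.add_sub_cancel]
  push_cast
  ring

lemma exists_blockCount (hpos : ∀ m ≤ M, 0 < r m)
    (hdvd : ∀ m, 1 ≤ m → m ≤ M → r m = k m * r (m - 1)) {L : ℝ} {N : ℕ} (hL : L = N * r M) :
    ∃ n : ℕ → ℕ, (∀ m ≤ M, (n m : ℝ) * r m = L) ∧
      ∀ m, 1 ≤ m → m ≤ M → n (m - 1) = n m * k m := by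
  choose! n hn using fun m (hm : m ≤ M) ↦ exists_natCast_mul_scale_eq hdvd hL hm
  refine ⟨n, hn, fun m h1 h2 ↦ ?_⟩
  have : (n (m - 1) : ℝ) * r (m - 1) = (n m * k m : ℕ) * r (m - 1) := by
    rw [hn _ (by omega), Nat.cast_mul, mul_assoc, ← hdvd m h1 h2, hn m h2]
  exact_mod_cast mul_right_cancel₀ (hpos _ (by omega)).ne' this

end Scales

theorem scales_II_general {Y : Type*} [MetricSpace Y]
    (K C ε : ℝ) (hK : 1 ≤ K) (hε : 0 < ε)
    (M : ℕ) (r : ℕ → ℝ) (k : ℕ → ℕ)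
    (hpos : ∀ m ≤ M, 0 < r m)
    (hr0 : 2 * K * C ≤ r 0)
    (hdvd : ∀ m, 1 ≤ m → m ≤ M → r m = k m * r (m - 1))
    (L : ℝ) (N : ℕ) (hN : 0 < N) (hL : L = N * r M)
    (α : ℝ → Y) (hα : IsQGeoOnM K C α L) :
    ∑ m ∈ Finset.Icc 1 M,
      (r m / L) *
        (Set.ncard {j : ℕ | (j : ℝ) < L / r m ∧
          ¬ (∑ i ∈ Finset.range (k m),
              dist (α (j * r m + (i + 1) * r (m - 1))) (α (j * r m + i * r (m - 1))) ≤
            (1 + ε) * dist (α (j * r m)) (α ((j + 1) * r m)))} : ℝ)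
      ≤ 4 * K ^ 2 / ε := by
  have hK0 : 0 < K := by linarith
  have hL0 : 0 < L := by rw [hL]; have := hpos M le_rfl; positivity
  obtain ⟨n, hn, hfine⟩ := exists_blockCount hpos hdvd hL
  set S : ℕ → ℝ := fun m ↦ chainLength α 0 (r m) (n m)
  set bad : ℕ → ℝ := fun m ↦ #(inefficientBlocks α ε (r (m - 1)) (r m) (k m) (n m))
  have hstep : ∀ m ∈ Icc 1 M, S m + ε * (r m / (2 * K)) * bad m ≤ S (m - 1) := fun m hm ↦ by
    obtain ⟨h1, h2⟩ := mem_Icc.mp hm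
    simpa only [S, bad, hfine m h1 h2] using
      hα.chainLength_add_card_inefficientBlocks_le hK0 hε.le (hdvd m h1 h2)
        (hr0.trans (scale_zero_le hpos hdvd h2)) (hpos m h2).le (hn m h2)
  have hS0 : S 0 ≤ L * (K + 1 / (2 * K)) :=
    hα.chainLength_le hK0 hr0 (hpos 0 M.zero_le).le (hn 0 M.zero_le)
  have hSM : 0 ≤ S M := sum_nonneg fun _ _ ↦ dist_nonneg
  calc _ = 2 * K / (ε * L) * ∑ m ∈ Icc 1 M, ε * (r m / (2 * K)) * bad m := by
        rw [mul_sum]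
        refine sum_congr rfl fun m hm ↦ ?_
        have hm := (mem_Icc.mp hm).2
        rw [← hn m hm, mul_div_cancel_right₀ _ (hpos m hm).ne', Set.ncard_setOf_natCast_lt_and]
        change _ * bad m = _
        field_simp
    _ ≤ 2 * K / (ε * L) * (L * (K + 1 / (2 * K))) := by
        gcongr
        linarith [sum_Icc_le_sub_of_add_le hstep]
    _ = (2 * K ^ 2 + 1) / ε := by field_simp
    _ ≤ 4 * K ^ 2 / ε := by gcongr; nlinarith

/-- **Scales Lemma II.** Given scales `r₀ ≤ r₁ ≤ … ≤ r_M` with `r₀ ≥ 2KC` and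
`r_m = k_m · r_{m-1}`, and a `(K,C)`-quasi-geodesic `α : [0, L] → Y` with `L = N · r_M`,
the fractions `δ_m(α)` of the subsegments of length `r_m` on which `α` is not `ε`-efficient
on scale `r_{m-1}` satisfy `∑ δ_m(α) ≤ 4K²/ε`. -/
theorem scales_II {Y : Type*} [MetricSpace Y]
    (K C ε : ℝ) (hK : 1 ≤ K) (hC : 0 ≤ C) (hε : 0 < ε)
    (M : ℕ) (r : ℕ → ℝ) (k : ℕ → ℕ)
    (hpos : ∀ m ≤ M, 0 < r m)
    (hr0 : 2 * K * C ≤ r 0)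
    (hdvd : ∀ m, 1 ≤ m → m ≤ M → r m = k m * r (m - 1))
    (L : ℝ) (N : ℕ) (hN : 0 < N) (hL : L = N * r M)
    (α : ℝ → Y) (hα : IsQGeoOnM K C α L) :
    ∑ m ∈ Finset.Icc 1 M,
      (r m / L) *
        (Set.ncard {j : ℕ | (j : ℝ) < L / r m ∧
          ¬ (∑ i ∈ Finset.range (k m),
              dist (α (j * r m + (i + 1) * r (m - 1))) (α (j * r m + i * r (m - 1))) ≤
            (1 + ε) * dist (α (j * r m)) (α ((j + 1) * r m)))} : ℝ)
      ≤ 4 * K ^ 2 / ε :=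
  scales_II_general K C ε hK hε M r k hpos hr0 hdvd L N hN hL α hα

end
end

section
/- Coarse Differentiation Lemma: let X and Y be metric spaces, K ≥ 1, C ≥ 0, ε > 0 and θ > 0. There exists a positive real L₀, depending only on K, C, ε and θ, with the following property: for every (K,C)-quasi-isometry φ : X → Y, every L that is a positive integer multiple of L₀, and every nonempty finite family 𝓕 of geodesic segments γ : [0,L] → X (isometric embeddings of [0,L] into X), there exist positive reals r and R with 2KC ≤ r, r dividing R, and R dividing L₀, such that #{ (γ, j) : γ ∈ 𝓕, 0 ≤ j < L/R, and the restriction of φ∘γ to [jR, (j+1)R] is ε-efficient on scale r } ≥ (1−θ)·|𝓕|·(L/R), where the restriction of φ∘γ to [jR, (j+1)R] is ε-efficient on scale r if Σ_{i=1}^{R/r} d_Y(φ(γ(jR + i·r)), φ(γ(jR + (i−1)·r))) ≤ (1+ε)·d_Y(φ(γ(jR)), φ(γ((j+1)R))). -/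
noncomputable section

/-- `φ` is a `(K,C)`-quasi-isometry between metric spaces. -/
def IsQIM {X Y : Type*} [MetricSpace X] [MetricSpace Y] (K C : ℝ) (φ : X → Y) : Prop :=
  (∀ a b : X, (1 / K) * dist a b - C ≤ dist (φ a) (φ b) ∧ dist (φ a) (φ b) ≤ K * dist a b + C)
    ∧ ∀ y : Y, ∃ x : X, dist (φ x) y ≤ C

/-!
Fix a base scale `c ≥ 2KC` and the dyadic scales `c 2ⁿ / 2ᵏ`, `k ≤ n`. For `f = φ ∘ γ`, the
length of the polygonal path sampling `f` at step `c 2ⁿ / 2ᵏ` increases with `k` by the triangle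
inequality, and is at most `(K + 1) L` at the finest scale `c`. Passing from level `k` to `k + 1`,
every block `[jR, (j+1)R]` on which `f` is not `ε`-efficient adds at least `ε R / (2K)` to this
length, because the lower quasi-isometry bound makes `f` move by at least `R / (2K)` across a block.
Telescoping, the fractions of inefficient blocks summed over the `n` levels are at most
`2K(K+1)/ε`, so once `n θ ≥ 2K(K+1)/ε` some level has an average fraction at most `θ` over `𝓕`.
-/

open Finset

def IsQIEmbeddingOn {α Y : Type*} [PseudoMetricSpace α] [PseudoMetricSpace Y] (K C : ℝ)
    (f : α → Y) (s : Set α) : Prop :=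
  ∀ u ∈ s, ∀ v ∈ s, (1 / K) * dist u v - C ≤ dist (f u) (f v) ∧ dist (f u) (f v) ≤ K * dist u v + C

theorem IsQIM.isQIEmbeddingOn_comp {X Y : Type*} [MetricSpace X] [MetricSpace Y] {K C : ℝ}
    {φ : X → Y} (hφ : IsQIM K C φ) {γ : ℝ → X} {s : Set ℝ}
    (hγ : ∀ u ∈ s, ∀ v ∈ s, dist (γ u) (γ v) = |u - v|) : IsQIEmbeddingOn K C (φ ∘ γ) s := by
  intro u hu v hv
  simpa only [Function.comp_apply, hγ u hu v hv, Real.dist_eq] using hφ.1 (γ u) (γ v)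

theorem le_mul_pow_div_pow {c : ℝ} (hc : 0 ≤ c) {k n : ℕ} (h : k ≤ n) : c ≤ c * 2 ^ n / 2 ^ k := by
  rw [le_div_iff₀ (by positivity)]
  exact mul_le_mul_of_nonneg_left (pow_le_pow_right₀ one_le_two h) hc

section Efficiency

variable {Y : Type*} [PseudoMetricSpace Y] {K C ε L r : ℝ} {f : ℝ → Y}

theorem IsQIEmbeddingOn.div_le_dist {α : Type*} [PseudoMetricSpace α] {g : α → Y} {s : Set α}
    (hg : IsQIEmbeddingOn K C g s) (hK : 0 < K) {u v : α} (hu : u ∈ s) (hv : v ∈ s)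
    (huv : 2 * K * C ≤ dist u v) : dist u v / (2 * K) ≤ dist (g u) (g v) := by
  have hC : C ≤ dist u v / (2 * K) := by rw [le_div_iff₀ (by positivity)]; linarith
  have := (hg u hu v hv).1
  have : (1 / K) * dist u v = 2 * (dist u v / (2 * K)) := by field_simp
  linarith

def stepLength (f : ℝ → Y) (x r : ℝ) (a : ℕ) : ℝ :=
  ∑ i ∈ range a, dist (f (x + (i + 1) * r)) (f (x + i * r))

def IsEfficient (f : ℝ → Y) (ε x r : ℝ) (a : ℕ) : Prop :=
  stepLength f x r a ≤ (1 + ε) * dist (f x) (f (x + a * r))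

open Classical in
def badBlocks (f : ℝ → Y) (ε r : ℝ) (a m : ℕ) : Finset ℕ :=
  {j ∈ range m | ¬ IsEfficient f ε (j * (a * r)) r a}

theorem stepLength_nonneg (f : ℝ → Y) (x r : ℝ) (a : ℕ) : 0 ≤ stepLength f x r a :=
  sum_nonneg fun _ _ ↦ dist_nonneg

theorem stepLength_mul (f : ℝ → Y) (x r : ℝ) (m a : ℕ) :
    stepLength f x r (m * a) = ∑ j ∈ range m, stepLength f (x + j * (a * r)) r a := by
  induction m with
  | zero => simp [stepLength]
  | succ m ih =>
    rw [add_mul, one_mul, stepLength, sum_range_add, ← stepLength, ih, sum_range_succ, stepLength]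
    congr 1
    refine sum_congr rfl fun i _ ↦ ?_
    push_cast
    ring_nf

theorem dist_le_stepLength (f : ℝ → Y) (x r : ℝ) (a : ℕ) :
    dist (f x) (f (x + a * r)) ≤ stepLength f x r a := by
  simpa [stepLength, dist_comm] using dist_le_range_sum_dist (fun i : ℕ ↦ f (x + i * r)) a

theorem le_stepLength_sub_dist_of_not_isEfficient {s : Set ℝ} (hf : IsQIEmbeddingOn K C f s)
    (hK : 0 < K) (hε : 0 ≤ ε) {x : ℝ} {a : ℕ} (hr : 0 ≤ r) (hKC : 2 * K * C ≤ a * r)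
    (hx : x ∈ s) (hy : x + a * r ∈ s) (h : ¬ IsEfficient f ε x r a) :
    ε * (a * r / (2 * K)) ≤ stepLength f x r a - dist (f x) (f (x + a * r)) := by
  have hdist : dist x (x + a * r) = a * r := by
    rw [Real.dist_eq, sub_add_cancel_left, abs_neg, abs_of_nonneg (by positivity)]
  have hlow := hf.div_le_dist hK hx hy (hdist.symm ▸ hKC)
  rw [hdist] at hlow
  have := mul_le_mul_of_nonneg_left hlow hε
  unfold IsEfficient at h
  linarith

theorem stepLength_le (hf : IsQIEmbeddingOn K C f (Set.Icc 0 L)) (hr : 0 ≤ r) {m : ℕ}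
    (hL : m * r ≤ L) : stepLength f 0 r m ≤ m * (K * r + C) := by
  have hmem : ∀ i ≤ m, (i : ℝ) * r ∈ Set.Icc 0 L := fun i hi =>
    ⟨by positivity, le_trans (by gcongr) hL⟩
  calc stepLength f 0 r m ≤ ∑ _i ∈ range m, (K * r + C) := by
        refine sum_le_sum fun i hi ↦ ?_
        have hi := mem_range.1 hi
        have := (hf _ (hmem (i + 1) hi) _ (hmem i hi.le)).2
        rw [Real.dist_eq, Nat.cast_succ, show ((i : ℝ) + 1) * r - i * r = r by ring,
          abs_of_nonneg hr] at this
        simpa only [zero_add] using this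
    _ = m * (K * r + C) := by rw [sum_const, card_range, nsmul_eq_mul]

theorem card_badBlocks_mul_le (hf : IsQIEmbeddingOn K C f (Set.Icc 0 L)) (hK : 0 < K) (hε : 0 ≤ ε)
    {a m : ℕ} (hr : 0 ≤ r) (hKC : 2 * K * C ≤ a * r) (hL : m * (a * r) ≤ L) :
    #(badBlocks f ε r a m) * (ε * (a * r / (2 * K))) ≤
      stepLength f 0 r (m * a) - stepLength f 0 (a * r) m := by
  set D : ℕ → ℝ := fun j ↦
    stepLength f (j * (a * r)) r a - dist (f (j * (a * r))) (f (j * (a * r) + a * r))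
  have hsplit : stepLength f 0 r (m * a) - stepLength f 0 (a * r) m = ∑ j ∈ range m, D j := by
    rw [stepLength_mul, stepLength, ← sum_sub_distrib]
    refine sum_congr rfl fun j _ ↦ ?_
    simp only [D, zero_add, add_one_mul, dist_comm (f (j * (a * r)))]
  have hmem : ∀ j ≤ m, (j : ℝ) * (a * r) ∈ Set.Icc 0 L := fun j hj =>
    ⟨by positivity, le_trans (by gcongr) hL⟩
  have hbad : ∀ j ∈ badBlocks f ε r a m, ε * (a * r / (2 * K)) ≤ D j := by
    intro j hj
    simp only [badBlocks, mem_filter, mem_range] at hj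
    refine le_stepLength_sub_dist_of_not_isEfficient hf hK hε hr hKC (hmem j hj.1.le) ?_ hj.2
    simpa [add_one_mul] using hmem (j + 1) hj.1
  rw [hsplit]
  calc #(badBlocks f ε r a m) * (ε * (a * r / (2 * K)))
      = ∑ _j ∈ badBlocks f ε r a m, ε * (a * r / (2 * K)) := by rw [sum_const, nsmul_eq_mul]
    _ ≤ ∑ j ∈ badBlocks f ε r a m, D j := sum_le_sum hbad
    _ ≤ ∑ j ∈ range m, D j :=
      sum_le_sum_of_subset_of_nonneg (by classical exact filter_subset _ _)
        fun j _ _ ↦ sub_nonneg.2 (dist_le_stepLength f _ r a)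

theorem sum_card_badBlocks_div_le {c : ℝ} {N n : ℕ}
    (hf : IsQIEmbeddingOn K C f (Set.Icc 0 (N * (c * 2 ^ n)))) (hK : 0 < K) (hε : 0 < ε)
    (hc : 0 < c) (hKC : 2 * K * C ≤ c) (hCc : C ≤ c) (hN : 0 < N) :
    ∑ k ∈ range n, (#(badBlocks f ε (c * 2 ^ n / 2 ^ (k + 1)) 2 (N * 2 ^ k)) : ℝ) / (N * 2 ^ k : ℕ)
      ≤ 2 * K * (K + 1) / ε := by
  set L : ℝ := N * (c * 2 ^ n)
  set F : ℕ → ℝ := fun k ↦ stepLength f 0 (c * 2 ^ n / 2 ^ k) (N * 2 ^ k)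
  have hL : 0 < L := by positivity
  have hlevel : ∀ k ∈ range n,
      (#(badBlocks f ε (c * 2 ^ n / 2 ^ (k + 1)) 2 (N * 2 ^ k)) : ℝ) / (N * 2 ^ k : ℕ) *
        (ε * (L / (2 * K))) ≤ F (k + 1) - F k := by
    intro k hk
    have hkn : k + 1 ≤ n := mem_range.1 hk
    set r := c * 2 ^ n / 2 ^ (k + 1)
    have hcr : c ≤ r := le_mul_pow_div_pow hc.le hkn
    have h2r : (2 : ℕ) * r = c * 2 ^ n / 2 ^ k := by
      simp only [r, pow_succ]; push_cast; field_simp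
    have hm2r : ((N * 2 ^ k : ℕ) : ℝ) * ((2 : ℕ) * r) = L := by
      rw [h2r]; push_cast; field_simp; simp only [L]; ring
    have := card_badBlocks_mul_le hf hK hε.le (a := 2) (m := N * 2 ^ k) (by positivity)
      (by push_cast; linarith) hm2r.le
    rw [h2r, mul_assoc N, ← pow_succ] at this
    convert this using 1
    rw [← hm2r, h2r]
    field_simp
  have htelescope := (sum_le_sum hlevel).trans_eq (sum_range_sub F n)
  have hFn : F n ≤ (K + 1) * L := calc
    F n = stepLength f 0 c (N * 2 ^ n) := by
      simp only [F, mul_div_cancel_right₀ c (pow_ne_zero n two_ne_zero)]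
    _ ≤ (N * 2 ^ n : ℕ) * (K * c + C) :=
      stepLength_le hf hc.le (le_of_eq (by simp only [L]; push_cast; ring))
    _ ≤ (N * 2 ^ n : ℕ) * ((K + 1) * c) := by gcongr; linarith
    _ = (K + 1) * L := by push_cast; ring
  have hF0 : 0 ≤ F 0 := stepLength_nonneg f _ _ _
  rw [← sum_mul] at htelescope
  set S := ∑ k ∈ range n,
    (#(badBlocks f ε (c * 2 ^ n / 2 ^ (k + 1)) 2 (N * 2 ^ k)) : ℝ) / (N * 2 ^ k : ℕ)
  rw [le_div_iff₀ hε]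
  refine le_of_mul_le_mul_right ?_ hL
  calc S * ε * L = S * (ε * (L / (2 * K))) * (2 * K) := by field_simp
    _ ≤ (K + 1) * L * (2 * K) := mul_le_mul_of_nonneg_right (by linarith) (by positivity)
    _ = 2 * K * (K + 1) * L := by ring

theorem ncard_isEfficient (f : ℝ → Y) (ε r : ℝ) (a m : ℕ) :
    ({j : ℕ | (j : ℝ) < m ∧ IsEfficient f ε (j * (a * r)) r a}.ncard : ℝ) =
      m - #(badBlocks f ε r a m) := by
  classical
  have hset : {j : ℕ | (j : ℝ) < m ∧ IsEfficient f ε (j * (a * r)) r a} =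
      ({j ∈ range m | IsEfficient f ε (j * (a * r)) r a} : Finset ℕ) := by
    ext j
    simp
  have hcard := card_filter_add_card_filter_not (s := range m)
    (fun j : ℕ ↦ IsEfficient f ε (j * (a * r)) r a)
  rw [card_range] at hcard
  rw [hset, Set.ncard_coe_finset, badBlocks, eq_sub_iff_add_eq]
  exact_mod_cast hcard

theorem exists_sum_card_badBlocks_le {ι : Type*} {𝓕 : Finset ι} {g : ι → ℝ → Y} {θ c : ℝ}
    {N n : ℕ} (hg : ∀ i ∈ 𝓕, IsQIEmbeddingOn K C (g i) (Set.Icc 0 (N * (c * 2 ^ n))))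
    (hK : 0 < K) (hε : 0 < ε) (hθ : 0 < θ) (hc : 0 < c) (hKC : 2 * K * C ≤ c) (hCc : C ≤ c)
    (hN : 0 < N) (hn : 2 * K * (K + 1) / (ε * θ) ≤ n) :
    ∃ k < n, ∑ i ∈ 𝓕, (#(badBlocks (g i) ε (c * 2 ^ n / 2 ^ (k + 1)) 2 (N * 2 ^ k)) : ℝ) ≤
      θ * #𝓕 * (N * 2 ^ k : ℕ) := by
  have hnθ : 2 * K * (K + 1) / ε ≤ n * θ := by
    rw [div_le_iff₀ hε]
    have := (div_le_iff₀ (by positivity)).1 hn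
    linarith
  have hn0 : (range n).Nonempty := by
    refine nonempty_range_iff.2 fun h ↦ ?_
    rw [h, Nat.cast_zero, zero_mul] at hnθ
    exact (not_le.2 (by positivity)) hnθ
  have hsum : ∑ k ∈ range n, ∑ i ∈ 𝓕,
      (#(badBlocks (g i) ε (c * 2 ^ n / 2 ^ (k + 1)) 2 (N * 2 ^ k)) : ℝ) / (N * 2 ^ k : ℕ) ≤
      ∑ _k ∈ range n, θ * #𝓕 := by
    rw [sum_comm, sum_const, card_range, nsmul_eq_mul]
    calc _ ≤ ∑ _i ∈ 𝓕, 2 * K * (K + 1) / ε := sum_le_sum fun i hi ↦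
          sum_card_badBlocks_div_le (hg i hi) hK hε hc hKC hCc hN
      _ ≤ ∑ _i ∈ 𝓕, n * θ := sum_le_sum fun _ _ ↦ hnθ
      _ = n * (θ * #𝓕) := by rw [sum_const, nsmul_eq_mul]; ring
  obtain ⟨k, hk, hkbad⟩ := exists_le_of_sum_le hn0 hsum
  rw [← sum_div, div_le_iff₀ (by positivity)] at hkbad
  exact ⟨k, mem_range.1 hk, hkbad⟩

end Efficiency

theorem coarse_differentiation_general {X Y : Type*} [MetricSpace X] [MetricSpace Y]
    (K C ε θ : ℝ) (hK : 1 ≤ K) (hε : 0 < ε) (hθ : 0 < θ) :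
    ∃ L₀ : ℝ, 0 < L₀ ∧
      ∀ φ : X → Y, IsQIM K C φ →
        ∀ L : ℝ, (∃ N : ℕ, 0 < N ∧ L = N * L₀) →
          ∀ 𝓕 : Finset (ℝ → X), 𝓕.Nonempty →
            (∀ γ ∈ 𝓕, ∀ s ∈ Set.Icc (0:ℝ) L, ∀ t ∈ Set.Icc (0:ℝ) L,
              dist (γ s) (γ t) = |s - t|) →
            ∃ (r R : ℝ) (a b : ℕ), 0 < a ∧ 0 < b ∧
              2 * K * C ≤ r ∧ R = a * r ∧ L₀ = b * R ∧
              (1 - θ) * 𝓕.card * (L / R) ≤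
                ∑ γ ∈ 𝓕,
                  (Set.ncard {j : ℕ | (j : ℝ) < L / R ∧
                    ∑ i ∈ Finset.range a,
                        dist (φ (γ (j * R + (i + 1) * r))) (φ (γ (j * R + i * r))) ≤
                      (1 + ε) * dist (φ (γ (j * R))) (φ (γ ((j + 1) * R)))} : ℝ) := by
  set c := max (2 * K * C) 1
  have hc : 0 < c := lt_max_of_lt_right one_pos
  have hKC : 2 * K * C ≤ c := le_max_left _ _
  have hCc : C ≤ c := by
    rcases le_or_gt 0 C with h | h
    · nlinarith
    · linarith
  set n := ⌈2 * K * (K + 1) / (ε * θ)⌉₊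
  refine ⟨c * 2 ^ n, by positivity, fun φ hφ L hL 𝓕 _ hγ ↦ ?_⟩
  obtain ⟨N, hN, rfl⟩ := hL
  obtain ⟨k, hk, hkbad⟩ := exists_sum_card_badBlocks_le
    (fun γ hγ𝓕 ↦ hφ.isQIEmbeddingOn_comp (hγ γ hγ𝓕)) (by linarith) hε hθ hc hKC hCc hN
    (Nat.le_ceil _)
  set r := c * 2 ^ n / 2 ^ (k + 1)
  have hLR : N * (c * 2 ^ n) / (2 * r) = (N * 2 ^ k : ℕ) := by
    simp only [r, pow_succ]; push_cast; field_simp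
  refine ⟨r, 2 * r, 2, 2 ^ k, two_pos, by positivity, hKC.trans (le_mul_pow_div_pow hc.le hk),
    by norm_num, by simp only [r, pow_succ]; push_cast; field_simp, ?_⟩
  have hsets : ∀ γ : ℝ → X, {j : ℕ | (j : ℝ) < N * (c * 2 ^ n) / (2 * r) ∧
      ∑ i ∈ range 2, dist (φ (γ (j * (2 * r) + (i + 1) * r))) (φ (γ (j * (2 * r) + i * r)))
        ≤ (1 + ε) * dist (φ (γ (j * (2 * r)))) (φ (γ ((j + 1) * (2 * r))))} =
      {j : ℕ | (j : ℝ) < (N * 2 ^ k : ℕ) ∧ IsEfficient (φ ∘ γ) ε (j * ((2 : ℕ) * r)) r 2} := by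
    intro γ
    ext j
    simp only [Set.mem_ofPred_eq, hLR, IsEfficient, stepLength, Function.comp_apply,
      Nat.cast_ofNat, add_one_mul]
  simp_rw [hsets, ncard_isEfficient, sum_sub_distrib, sum_const, nsmul_eq_mul, hLR]
  linarith

/-- **Coarse Differentiation Lemma.** For every `(K,C)`-quasi-isometry `φ : X → Y`, every
`L` a positive multiple of a constant `L₀ = L₀(K,C,ε,θ)`, and every nonempty finite family
`𝓕` of geodesic segments `γ : [0,L] → X`, there exist scales `2KC ≤ r ∣ R ∣ L₀` such that at
least a `(1-θ)`-fraction of the `R`-subsegments of the `φ∘γ`, `γ ∈ 𝓕`, are `ε`-efficient at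
scale `r`. -/
theorem coarse_differentiation {X Y : Type*} [MetricSpace X] [MetricSpace Y]
    (K C ε θ : ℝ) (hK : 1 ≤ K) (hC : 0 ≤ C) (hε : 0 < ε) (hθ : 0 < θ) :
    ∃ L₀ : ℝ, 0 < L₀ ∧
      ∀ φ : X → Y, IsQIM K C φ →
        ∀ L : ℝ, (∃ N : ℕ, 0 < N ∧ L = N * L₀) →
          ∀ 𝓕 : Finset (ℝ → X), 𝓕.Nonempty →
            (∀ γ ∈ 𝓕, ∀ s ∈ Set.Icc (0:ℝ) L, ∀ t ∈ Set.Icc (0:ℝ) L,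
              dist (γ s) (γ t) = |s - t|) →
            ∃ (r R : ℝ) (a b : ℕ), 0 < a ∧ 0 < b ∧
              2 * K * C ≤ r ∧ R = a * r ∧ L₀ = b * R ∧
              (1 - θ) * 𝓕.card * (L / R) ≤
                ∑ γ ∈ 𝓕,
                  (Set.ncard {j : ℕ | (j : ℝ) < L / R ∧
                    ∑ i ∈ Finset.range a,
                        dist (φ (γ (j * R + (i + 1) * r))) (φ (γ (j * R + i * r))) ≤
                      (1 + ε) * dist (φ (γ (j * R))) (φ (γ ((j + 1) * R)))} : ℝ) :=
  coarse_differentiation_general K C ε θ hK hε hθ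
end
end

section
/- There exist constants K ≥ 1 and C ≥ 0 such that the map π₁ × π₂ : Sol → ℍ² × ℍ², (x,y,z) ↦ ((x,z), (y,−z)), is a (K,C)-quasi-isometric embedding, where ℍ² × ℍ² carries the distance d((u,v),(u′,v′)) = max(d_hyp(u,u′), d_hyp(v,v′)). -/
open Set

noncomputable section

/-- The length of a path in the log model of the hyperbolic plane `ℍ²`:
`ds² = e^{-z} dx² + dz²` in coordinates `(x, z)`. -/
def hypLength (γ : ℝ → ℝ × ℝ) : ℝ :=
  ∫ t in (0:ℝ)..1,
    Real.sqrt (Real.exp (-(γ t).2) * (deriv (fun s => (γ s).1) t) ^ 2 +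
      (deriv (fun s => (γ s).2) t) ^ 2)

/-- The hyperbolic distance on the log model `ℍ² = ℝ²`. -/
def dHyp (p q : ℝ × ℝ) : ℝ :=
  sInf {ℓ : ℝ | ∃ γ : ℝ → ℝ × ℝ,
    γ 0 = p ∧ γ 1 = q ∧ PiecewiseC1 γ ∧ hypLength γ = ℓ}

/-! Each projection shortens paths: pointwise, the Sol metric dominates the pull-back of the
hyperbolic metric of either factor, so `max (d_hyp, d_hyp) ≤ d_Sol`. Conversely, take nearly
shortest paths `γ₁` in the `(x, z)`-plane and `γ₂` in the `(y, -z)`-plane. The Sol path that follows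
`γ₂` with `x` frozen, climbs vertically back to the initial height and then follows `γ₁` with `y`
frozen has length at most `L γ₂ + |Δz| + L γ₁ ≤ L γ₂ + 2 L γ₁`, because the height is 1-Lipschitz
on `ℍ²`. Hence `d_Sol ≤ 3 max (d_hyp, d_hyp)`. -/

open MeasureTheory intervalIntegral Filter Topology

lemma mem_Icc_of_forall_le_succ {τ : ℕ → ℝ} {n i : ℕ} (hτ : ∀ j < n, τ j ≤ τ (j + 1))
    (hi : i ≤ n) : τ i ∈ Icc (τ 0) (τ n) := by
  have hmono : MonotoneOn τ (Iic n) :=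
    monotoneOn_of_le_succ ordConnected_Iic fun j _ _ hj => hτ j (Order.succ_le_iff.mp hj)
  exact ⟨hmono (Nat.zero_le n) hi (Nat.zero_le i), hmono hi (mem_Iic.2 le_rfl) hi⟩

section pathConcat

variable {E : Type*} {γ δ : ℝ → E}

def pathConcat (γ δ : ℝ → E) (t : ℝ) : E := if t ≤ 1 / 2 then γ (2 * t) else δ (2 * t - 1)

lemma pathConcat_zero : pathConcat γ δ 0 = γ 0 := by simp [pathConcat]

lemma pathConcat_one : pathConcat γ δ 1 = δ 1 := by norm_num [pathConcat]

lemma eqOn_pathConcat_left : EqOn (pathConcat γ δ) (fun t => γ (2 * t)) (Iic (1 / 2)) :=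
  fun _ ht => if_pos ht

lemma eqOn_pathConcat_right (h : γ 1 = δ 0) :
    EqOn (pathConcat γ δ) (fun t => δ (2 * t - 1)) (Ici (1 / 2)) := by
  intro t ht
  rcases (mem_Ici.mp ht).eq_or_lt with rfl | ht
  · norm_num [pathConcat, h]
  · exact if_neg (not_le.mpr ht)

end pathConcat

section PiecewiseC1

variable {E F : Type*} [NormedAddCommGroup E] [NormedSpace ℝ E] [NormedAddCommGroup F]
  [NormedSpace ℝ F] {γ δ : ℝ → E}

lemma ContDiff.piecewiseC1_s16 (h : ContDiff ℝ 1 γ) : PiecewiseC1 γ :=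
  ⟨1, fun i => i, by simp, by simp, fun i _ => by simp, fun _ _ => h.contDiffOn⟩

lemma PiecewiseC1.comp {f : E → F} (hf : ContDiff ℝ 1 f) (hγ : PiecewiseC1 γ) :
    PiecewiseC1 (fun t => f (γ t)) := by
  obtain ⟨n, τ, h0, h1, hτ, hC⟩ := hγ
  exact ⟨n, τ, h0, h1, hτ, fun i hi => hf.comp_contDiffOn (hC i hi)⟩

lemma exists_piecewiseC1_path (p q : E) : ∃ γ : ℝ → E, γ 0 = p ∧ γ 1 = q ∧ PiecewiseC1 γ :=
  ⟨AffineMap.lineMap p q, by simp, by simp, (AffineMap.contDiff_lineMap p q).piecewiseC1_s16⟩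

lemma PiecewiseC1.norm_sub_le_integral [CompleteSpace E] {g : ℝ → ℝ} (hγ : PiecewiseC1 γ)
    (hg : IntervalIntegrable g volume 0 1) (hle : ∀ t, ‖deriv γ t‖ ≤ g t) :
    ‖γ 1 - γ 0‖ ≤ ∫ t in (0 : ℝ)..1, g t := by
  obtain ⟨n, τ, h0, h1, hτ, hC⟩ := hγ
  rw [← h0, ← h1] at hg ⊢
  have hg' : ∀ i < n, IntervalIntegrable g volume (τ i) (τ (i + 1)) := fun i hi =>
    hg.mono_set <| uIcc_subset_uIcc (Icc_subset_uIcc (mem_Icc_of_forall_le_succ hτ hi.le))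
      (Icc_subset_uIcc (mem_Icc_of_forall_le_succ hτ hi))
  rw [← sum_integral_adjacent_intervals hg', ← Finset.sum_range_sub (fun i => γ (τ i))]
  refine (norm_sum_le _ _).trans (Finset.sum_le_sum fun i hi => ?_)
  have hi := Finset.mem_range.mp hi
  rw [← integral_deriv_of_contDiffOn_Icc (hC i hi) (hτ i hi)]
  exact norm_integral_le_of_norm_le (hτ i hi) (ae_of_all _ fun t _ => hle t) (hg' i hi)

lemma ContDiffOn.comp_two_mul_sub {a b : ℝ} (d : ℝ) (h : ContDiffOn ℝ 1 γ (Icc a b)) :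
    ContDiffOn ℝ 1 (fun t => γ (2 * t - d)) (Icc ((a + d) / 2) ((b + d) / 2)) :=
  h.comp (by fun_prop) fun t ht => ⟨by linarith [ht.1], by linarith [ht.2]⟩

lemma PiecewiseC1.pathConcat (hγ : PiecewiseC1 γ) (hδ : PiecewiseC1 δ) (h : γ 1 = δ 0) :
    PiecewiseC1 (pathConcat γ δ) := by
  obtain ⟨n, τ, τ0, τn, hτ, hCτ⟩ := hγ
  obtain ⟨m, σ, σ0, σm, hσ, hCσ⟩ := hδ
  set κ : ℕ → ℝ := fun k => if k ≤ n then τ k / 2 else (σ (k - n) + 1) / 2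
  have hκτ : ∀ i ≤ n, κ i = τ i / 2 := fun i hi => if_pos hi
  have hκσ : ∀ j, κ (n + j) = (σ j + 1) / 2 := by
    rintro (_ | j)
    · simp [κ, τn, σ0]
    · exact (if_neg (by omega)).trans (by simp)
  refine ⟨n + m, κ, by simp [κ, τ0], by simp [hκσ, σm], fun i hi => ?_, fun i hi => ?_⟩ <;>
    rcases lt_or_ge i n with hin | hin
  · rw [hκτ i hin.le, hκτ (i + 1) hin]; linarith [hτ i hin]
  · obtain ⟨j, rfl⟩ := Nat.exists_eq_add_of_le hin
    rw [add_assoc, hκσ, hκσ]; linarith [hσ j (by omega)]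
  · rw [hκτ i hin.le, hκτ (i + 1) hin]
    have hCγ : ContDiffOn ℝ 1 (fun t => γ (2 * t)) (Icc (τ i / 2) (τ (i + 1) / 2)) := by
      simpa using (hCτ i hin).comp_two_mul_sub 0
    refine hCγ.congr fun t ht => eqOn_pathConcat_left ?_
    have : τ (i + 1) ≤ 1 := τn ▸ (mem_Icc_of_forall_le_succ hτ hin).2
    exact show t ≤ 1 / 2 by linarith [ht.2]
  · obtain ⟨j, rfl⟩ := Nat.exists_eq_add_of_le hin
    rw [add_assoc, hκσ, hκσ]
    refine ((hCσ j (by omega)).comp_two_mul_sub 1).congr fun t ht => ?_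
    have : 0 ≤ σ j := σ0 ▸ (mem_Icc_of_forall_le_succ hσ (by omega : j ≤ m)).1
    exact eqOn_pathConcat_right h (show 1 / 2 ≤ t by linarith [ht.1])

end PiecewiseC1

section lengthDist

variable {E : Type*} [NormedAddCommGroup E] [NormedSpace ℝ E] {L : (ℝ → E) → ℝ} {p q r : E}

/-- `dSol` and `dHyp` are, by definition, `lengthDist solLength` and `lengthDist hypLength`. -/
def lengthDist (L : (ℝ → E) → ℝ) (p q : E) : ℝ :=
  sInf {ℓ : ℝ | ∃ γ : ℝ → E, γ 0 = p ∧ γ 1 = q ∧ PiecewiseC1 γ ∧ L γ = ℓ}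

lemma lengthDist_le (hL : ∀ γ, 0 ≤ L γ) {γ : ℝ → E} (h0 : γ 0 = p) (h1 : γ 1 = q)
    (hγ : PiecewiseC1 γ) : lengthDist L p q ≤ L γ :=
  csInf_le ⟨0, by rintro _ ⟨δ, -, -, -, rfl⟩; exact hL δ⟩ ⟨γ, h0, h1, hγ, rfl⟩

lemma le_lengthDist {c : ℝ} (h : ∀ γ : ℝ → E, γ 0 = p → γ 1 = q → PiecewiseC1 γ → c ≤ L γ) :
    c ≤ lengthDist L p q := by
  obtain ⟨γ, h0, h1, hγ⟩ := exists_piecewiseC1_path p q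
  refine le_csInf ⟨L γ, γ, h0, h1, hγ, rfl⟩ ?_
  rintro _ ⟨δ, h0, h1, hδ, rfl⟩
  exact h δ h0 h1 hδ

lemma lengthDist_nonneg (hL : ∀ γ, 0 ≤ L γ) : 0 ≤ lengthDist L p q :=
  le_lengthDist fun γ _ _ _ => hL γ

lemma lengthDist_triangle (hL : ∀ γ, 0 ≤ L γ)
    (hadd : ∀ γ δ : ℝ → E, PiecewiseC1 γ → PiecewiseC1 δ → γ 1 = δ 0 →
      L (pathConcat γ δ) = L γ + L δ) :
    lengthDist L p r ≤ lengthDist L p q + lengthDist L q r := by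
  suffices lengthDist L p r - lengthDist L p q ≤ lengthDist L q r by linarith
  refine le_lengthDist fun δ hδ0 hδ1 hδ => ?_
  suffices lengthDist L p r - L δ ≤ lengthDist L p q by linarith
  refine le_lengthDist fun γ hγ0 hγ1 hγ => ?_
  have hγδ : γ 1 = δ 0 := hγ1.trans hδ0.symm
  have := lengthDist_le hL (pathConcat_zero.trans hγ0) (pathConcat_one.trans hδ1)
    (hγ.pathConcat hδ hγδ)
  linarith [hadd γ δ hγ hδ hγδ]

end lengthDist

def solSpeed (γ : ℝ → ℝ × ℝ × ℝ) (t : ℝ) : ℝ :=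
  Real.sqrt (Real.exp (-(γ t).2.2) * (deriv (fun s => (γ s).1) t) ^ 2 +
    Real.exp ((γ t).2.2) * (deriv (fun s => (γ s).2.1) t) ^ 2 +
    (deriv (fun s => (γ s).2.2) t) ^ 2)

def hypSpeed (δ : ℝ → ℝ × ℝ) (t : ℝ) : ℝ :=
  Real.sqrt (Real.exp (-(δ t).2) * (deriv (fun s => (δ s).1) t) ^ 2 +
    (deriv (fun s => (δ s).2) t) ^ 2)

lemma solLength_eq_integral (γ : ℝ → ℝ × ℝ × ℝ) :
    solLength γ = ∫ t in (0 : ℝ)..1, solSpeed γ t := rfl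

lemma hypLength_eq_integral (δ : ℝ → ℝ × ℝ) :
    hypLength δ = ∫ t in (0 : ℝ)..1, hypSpeed δ t := rfl

lemma solLength_nonneg (γ : ℝ → ℝ × ℝ × ℝ) : 0 ≤ solLength γ :=
  integral_nonneg zero_le_one fun _ _ => Real.sqrt_nonneg _

lemma hypLength_nonneg (δ : ℝ → ℝ × ℝ) : 0 ≤ hypLength δ :=
  integral_nonneg zero_le_one fun _ _ => Real.sqrt_nonneg _

lemma hypSpeed_eq_solSpeed (δ : ℝ → ℝ × ℝ) (c : ℝ) :
    hypSpeed δ = solSpeed (fun s => ((δ s).1, c, (δ s).2)) := by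
  ext t
  simp [hypSpeed, solSpeed]

lemma hypLength_eq_solLength (δ : ℝ → ℝ × ℝ) (c : ℝ) :
    hypLength δ = solLength (fun s => ((δ s).1, c, (δ s).2)) := by
  rw [hypLength_eq_integral, hypSpeed_eq_solSpeed δ c, solLength_eq_integral]

lemma solSpeed_congr {γ γ' : ℝ → ℝ × ℝ × ℝ} {t : ℝ} (h : γ =ᶠ[𝓝 t] γ') :
    solSpeed γ t = solSpeed γ' t := by
  have hderiv (f : ℝ × ℝ × ℝ → ℝ) : deriv (fun s => f (γ s)) t = deriv (fun s => f (γ' s)) t :=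
    (h.fun_comp f).deriv_eq
  have hx : deriv (fun s => (γ s).1) t = _ := hderiv Prod.fst
  have hy : deriv (fun s => (γ s).2.1) t = _ := hderiv fun p => p.2.1
  have hz : deriv (fun s => (γ s).2.2) t = _ := hderiv fun p => p.2.2
  simp only [solSpeed, hx, hy, hz, h.eq_of_nhds]

lemma solSpeed_comp_mul_sub (γ : ℝ → ℝ × ℝ × ℝ) {c : ℝ} (hc : 0 ≤ c) (d t : ℝ) :
    solSpeed (fun s => γ (c * s - d)) t = c * solSpeed γ (c * t - d) := by
  have hderiv (u : ℝ → ℝ) : deriv (fun s => u (c * s - d)) t = c * deriv u (c * t - d) := by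
    rw [deriv_comp_mul_left c (fun s => u (s - d)), deriv_comp_sub_const, smul_eq_mul]
  have hsqrt (X : ℝ) : Real.sqrt (c ^ 2 * X) = c * Real.sqrt X := by
    rw [Real.sqrt_mul (sq_nonneg c), Real.sqrt_sq hc]
  simp only [solSpeed, hderiv (fun s => (γ s).1), hderiv (fun s => (γ s).2.1),
    hderiv (fun s => (γ s).2.2)]
  rw [← hsqrt]
  ring_nf

lemma ContDiffOn.intervalIntegrable_solSpeed_s16 {γ : ℝ → ℝ × ℝ × ℝ} {a b : ℝ}
    (hγ : ContDiffOn ℝ 1 γ (Icc a b)) (hab : a ≤ b) :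
    IntervalIntegrable (solSpeed γ) volume a b := by
  rcases hab.eq_or_lt with rfl | hab
  · exact .refl
  have hd {u : ℝ → ℝ} (hu : ContDiffOn ℝ 1 u (Icc a b)) :
      ContinuousOn (derivWithin u (Icc a b)) (Icc a b) :=
    hu.continuousOn_derivWithin (uniqueDiffOn_Icc hab) le_rfl
  have hx : ContinuousOn (derivWithin (fun s => (γ s).1) (Icc a b)) (Icc a b) :=
    hd (contDiff_fst.comp_contDiffOn hγ)
  have hy : ContinuousOn (derivWithin (fun s => (γ s).2.1) (Icc a b)) (Icc a b) :=
    hd ((contDiff_fst.comp contDiff_snd).comp_contDiffOn hγ)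
  have hz : ContinuousOn (fun s => (γ s).2.2) (Icc a b) :=
    (continuous_snd.comp continuous_snd).comp_continuousOn hγ.continuousOn
  have hz' : ContinuousOn (derivWithin (fun s => (γ s).2.2) (Icc a b)) (Icc a b) :=
    hd ((contDiff_snd.comp contDiff_snd).comp_contDiffOn hγ)
  refine ContinuousOn.intervalIntegrable_of_Icc hab.le (u := fun t =>
    Real.sqrt (Real.exp (-(γ t).2.2) * (derivWithin (fun s => (γ s).1) (Icc a b) t) ^ 2 +
      Real.exp ((γ t).2.2) * (derivWithin (fun s => (γ s).2.1) (Icc a b) t) ^ 2 +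
      (derivWithin (fun s => (γ s).2.2) (Icc a b) t) ^ 2)) (by fun_prop) |>.congr_uIoo ?_
  rw [uIoo_of_le hab.le]
  intro t ht
  simp only [solSpeed, derivWithin_of_mem_nhds (Icc_mem_nhds ht.1 ht.2)]

lemma PiecewiseC1.intervalIntegrable_solSpeed_s16 {γ : ℝ → ℝ × ℝ × ℝ} (hγ : PiecewiseC1 γ) :
    IntervalIntegrable (solSpeed γ) volume 0 1 := by
  obtain ⟨n, τ, h0, h1, hτ, hC⟩ := hγ
  rw [← h0, ← h1]
  exact .trans_iterate fun i hi => (hC i hi).intervalIntegrable_solSpeed_s16 (hτ i hi)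

lemma PiecewiseC1.intervalIntegrable_hypSpeed {δ : ℝ → ℝ × ℝ} (hδ : PiecewiseC1 δ) :
    IntervalIntegrable (hypSpeed δ) volume 0 1 := by
  rw [hypSpeed_eq_solSpeed δ 0]
  exact (hδ.comp (f := fun v : ℝ × ℝ => (v.1, (0 : ℝ), v.2)) (by fun_prop))
    |>.intervalIntegrable_solSpeed

lemma solLength_pathConcat {γ δ : ℝ → ℝ × ℝ × ℝ} (hγ : PiecewiseC1 γ) (hδ : PiecewiseC1 δ)
    (h : γ 1 = δ 0) : solLength (pathConcat γ δ) = solLength γ + solLength δ := by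
  have hint := (hγ.pathConcat hδ h).intervalIntegrable_solSpeed_s16
  have hhalf : (1 / 2 : ℝ) ∈ uIcc 0 1 := by norm_num [uIcc_of_le]
  have hleft : ∫ t in (0 : ℝ)..1 / 2, solSpeed (pathConcat γ δ) t = solLength γ := by
    rw [integral_congr_Ioo_of_le (by norm_num) (g := fun t => 2 * solSpeed γ (2 * t - 0))]
    · rw [intervalIntegral.integral_const_mul, integral_comp_mul_sub _ two_ne_zero, smul_eq_mul,
        mul_inv_cancel_left₀ two_ne_zero]
      norm_num [solLength_eq_integral]
    · intro t ht
      rw [solSpeed_congr (eqOn_pathConcat_left.eventuallyEq_of_mem (Iic_mem_nhds ht.2))]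
      simpa using solSpeed_comp_mul_sub γ zero_le_two 0 t
  have hright : ∫ t in (1 / 2 : ℝ)..1, solSpeed (pathConcat γ δ) t = solLength δ := by
    rw [integral_congr_Ioo_of_le (by norm_num) (g := fun t => 2 * solSpeed δ (2 * t - 1))]
    · rw [intervalIntegral.integral_const_mul, integral_comp_mul_sub _ two_ne_zero, smul_eq_mul,
        mul_inv_cancel_left₀ two_ne_zero]
      norm_num [solLength_eq_integral]
    · intro t ht
      rw [solSpeed_congr ((eqOn_pathConcat_right h).eventuallyEq_of_mem (Ici_mem_nhds ht.1))]
      exact solSpeed_comp_mul_sub δ zero_le_two 1 t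
  rw [solLength_eq_integral, ← integral_add_adjacent_intervals
    (hint.mono_set (uIcc_subset_uIcc_left hhalf)) (hint.mono_set (uIcc_subset_uIcc_right hhalf)),
    hleft, hright]

lemma dSol_triangle (p q r : ℝ × ℝ × ℝ) : dSol p r ≤ dSol p q + dSol q r :=
  lengthDist_triangle solLength_nonneg fun _ _ => solLength_pathConcat

lemma dSol_nonneg (p q : ℝ × ℝ × ℝ) : 0 ≤ dSol p q :=
  lengthDist_nonneg solLength_nonneg

/-- The isometry of Sol exchanging the two projections to `ℍ²`. -/
def solFlip (p : ℝ × ℝ × ℝ) : ℝ × ℝ × ℝ := (p.2.1, p.1, -p.2.2)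

lemma solSpeed_flip (γ : ℝ → ℝ × ℝ × ℝ) (t : ℝ) :
    solSpeed (fun s => solFlip (γ s)) t = solSpeed γ t := by
  have hz : deriv (fun s => -(γ s).2.2) t = -deriv (fun s => (γ s).2.2) t := deriv.neg
  simp only [solSpeed, solFlip, hz, neg_neg, neg_sq]
  ring_nf

lemma dSol_flip_le (p q : ℝ × ℝ × ℝ) : dSol (solFlip p) (solFlip q) ≤ dSol p q := by
  refine le_lengthDist fun γ h0 h1 hγ => ?_
  have hflip : ContDiff ℝ 1 solFlip := by unfold solFlip; fun_prop
  calc dSol (solFlip p) (solFlip q) ≤ solLength (fun s => solFlip (γ s)) :=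
        lengthDist_le solLength_nonneg (by rw [h0]) (by rw [h1]) (hγ.comp hflip)
    _ = solLength γ := by simp only [solLength_eq_integral, solSpeed_flip]

lemma dSol_le_dHyp_of_snd_eq (x y z x' z' : ℝ) :
    dSol (x, y, z) (x', y, z') ≤ dHyp (x, z) (x', z') :=
  le_lengthDist fun δ h0 h1 hδ => by
    rw [hypLength_eq_solLength δ y]
    exact lengthDist_le solLength_nonneg (by simp [h0]) (by simp [h1])
      (hδ.comp (f := fun v : ℝ × ℝ => (v.1, y, v.2)) (by fun_prop))

lemma dSol_le_abs_sub (x y z z' : ℝ) : dSol (x, y, z) (x, y, z') ≤ |z' - z| := by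
  have hγ : ContDiff ℝ 1 (fun t : ℝ => (x, y, z + t * (z' - z))) := by fun_prop
  refine (lengthDist_le solLength_nonneg (by simp) (by simp) hγ.piecewiseC1_s16).trans_eq ?_
  simp [solLength_eq_integral, solSpeed, Real.sqrt_sq_eq_abs]

lemma hypLength_le_solLength {γ : ℝ → ℝ × ℝ × ℝ} (hγ : PiecewiseC1 γ) :
    hypLength (fun s => ((γ s).1, (γ s).2.2)) ≤ solLength γ := by
  refine integral_mono_on zero_le_one
    (hγ.comp (f := fun p : ℝ × ℝ × ℝ => (p.1, p.2.2)) (by fun_prop)).intervalIntegrable_hypSpeed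
    hγ.intervalIntegrable_solSpeed_s16 fun t _ => Real.sqrt_le_sqrt ?_
  linarith [mul_nonneg (Real.exp_pos (γ t).2.2).le (sq_nonneg (deriv (fun s => (γ s).2.1) t))]

lemma dHyp_le_dSol (p q : ℝ × ℝ × ℝ) : dHyp (p.1, p.2.2) (q.1, q.2.2) ≤ dSol p q :=
  le_lengthDist fun γ h0 h1 hγ =>
    (lengthDist_le hypLength_nonneg (by simp [h0]) (by simp [h1])
      (hγ.comp (f := fun p : ℝ × ℝ × ℝ => (p.1, p.2.2)) (by fun_prop))).trans
      (hypLength_le_solLength hγ)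

lemma abs_sub_le_dHyp (p q : ℝ × ℝ) : |q.2 - p.2| ≤ dHyp p q := by
  refine le_lengthDist fun δ h0 h1 hδ => ?_
  have := (hδ.comp contDiff_snd).norm_sub_le_integral hδ.intervalIntegrable_hypSpeed fun t => by
    rw [Real.norm_eq_abs, ← Real.sqrt_sq_eq_abs]
    exact Real.sqrt_le_sqrt
      (le_add_of_nonneg_left (mul_nonneg (Real.exp_pos _).le (sq_nonneg _)))
  simpa [h0, h1, hypLength_eq_integral] using this

lemma dSol_le_three_mul_max_dHyp (p q : ℝ × ℝ × ℝ) :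
    dSol p q ≤ 3 * max (dHyp (p.1, p.2.2) (q.1, q.2.2)) (dHyp (p.2.1, -p.2.2) (q.2.1, -q.2.2)) := by
  obtain ⟨x, y, z⟩ := p
  obtain ⟨x', y', z'⟩ := q
  have hfirst : dSol (x, y, z) (x, y', z') ≤ dHyp (y, -z) (y', -z') := by
    simpa [solFlip] using
      (dSol_flip_le (y, x, -z) (y', x, -z')).trans (dSol_le_dHyp_of_snd_eq y x (-z) y' (-z'))
  have hheight : |z - z'| ≤ dHyp (x, z) (x', z') :=
    abs_sub_comm z' z ▸ abs_sub_le_dHyp (x, z) (x', z')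
  calc dSol (x, y, z) (x', y', z')
      ≤ dSol (x, y, z) (x, y', z') + dSol (x, y', z') (x, y', z) +
          dSol (x, y', z) (x', y', z') := by
        linarith [dSol_triangle (x, y, z) (x, y', z') (x', y', z'),
          dSol_triangle (x, y', z') (x, y', z) (x', y', z')]
    _ ≤ dHyp (y, -z) (y', -z') + |z - z'| + dHyp (x, z) (x', z') :=
        add_le_add_three hfirst (dSol_le_abs_sub x y' z' z) (dSol_le_dHyp_of_snd_eq x y' z x' z')
    _ ≤ 3 * max (dHyp (x, z) (x', z')) (dHyp (y, -z) (y', -z')) := by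
        linarith [le_max_left (dHyp (x, z) (x', z')) (dHyp (y, -z) (y', -z')),
          le_max_right (dHyp (x, z) (x', z')) (dHyp (y, -z) (y', -z'))]

/-- **Lemma.** The pair of projections `(x,y,z) ↦ ((x,z), (y,-z))` is a quasi-isometric
embedding `Sol → ℍ² × ℍ²`, where the product carries the sup distance. -/
theorem sol_embeds_in_H2xH2 :
    ∃ K C : ℝ, 1 ≤ K ∧ 0 ≤ C ∧
      IsQIE dSol
        (fun u v : (ℝ × ℝ) × (ℝ × ℝ) => max (dHyp u.1 v.1) (dHyp u.2 v.2))
        K C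
        (fun p : ℝ × ℝ × ℝ => ((p.1, p.2.2), (p.2.1, -p.2.2))) := by
  refine ⟨3, 0, by norm_num, le_rfl, fun p q => ⟨?_, ?_⟩⟩
  · have := dSol_le_three_mul_max_dHyp p q
    dsimp only
    linarith
  · have h₁ := dHyp_le_dSol p q
    have h₂ := (dHyp_le_dSol (solFlip p) (solFlip q)).trans (dSol_flip_le p q)
    have h₀ := dSol_nonneg p q
    exact (max_le h₁ h₂).trans (by linarith)

end
end
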